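/- arXiv:2103.11443 — 10 statements merged into one kernel-verified Lean document; each statement's English description precedes it below -/
import Mathlib

section
/- Let G be a bipartite graph with parts V1, V2, in which every vertex of V1 has degree r ≥ 2 and every vertex of V2 has degree s ≥ 2, and suppose G has diameter at most 2m for some m ≥ 1. Then |V2| ≤ r · ((r-1)(s-1))^m - 1) / ((r-1)(s-1) - 1), i.e., |V2| ≤ r · (1 + (r-1)(s-1) + ... + ((r-1)(s-1))^{m-1}). -/
/-!
Fix `u ∈ V1` and sort the vertices by their distance from `u`. Since `G` is bipartite, the
vertices of `V2` are exactly those at odd distance, and by the diameter bound that distance is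
at most `2m - 1`. Every vertex at distance `k ≥ 1` has a neighbour at distance `k - 1`, so it has
at most `deg - 1` neighbours at distance `k + 1`; degrees alternate between `r` (even distance)
and `s` (odd distance), so the sphere of radius `2i + 1` has at most `r ((r-1)(s-1))^i` vertices.
-/

open Finset

namespace SimpleGraph

variable {V : Type*} {G : SimpleGraph V}

lemma ncard_neighborSet_eq_degree [Fintype V] [DecidableRel G.Adj] (v : V) :
    (G.neighborSet v).ncard = G.degree v := by
  rw [← card_neighborFinset_eq_degree, neighborFinset_def, Set.ncard_eq_toFinset_card']

lemma Connected.exists_adj_dist_eq_of_dist_eq_succ (hconn : G.Connected) {u v : V} {j : ℕ}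
    (h : G.dist u v = j + 1) : ∃ w, G.Adj w v ∧ G.dist u w = j := by
  obtain ⟨p, hp⟩ := hconn.exists_walk_length_eq_dist v u
  rw [dist_comm, h] at hp
  cases p with
  | nil => simp at hp
  | @cons _ w _ hadj q =>
    have hq : G.dist w u ≤ j := by
      have := dist_le q
      simp only [Walk.length_cons] at hp
      omega
    have htri := hconn.dist_triangle (u := u) (v := w) (w := v)
    rw [dist_eq_one_iff_adj.mpr hadj.symm] at htri
    exact ⟨w, hadj.symm, by rw [dist_comm] at hq; omega⟩

lemma Connected.even_dist_iff_congr (hconn : G.Connected) (c : G.Coloring Bool) (u w : V) :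
    Even (G.dist u w) ↔ (c u ↔ c w) := by
  obtain ⟨p, hp⟩ := hconn.exists_walk_length_eq_dist u w
  rw [← hp]
  exact c.even_length_iff_congr p

section Spheres

variable [Fintype V]

noncomputable def distSphere (G : SimpleGraph V) (u : V) (k : ℕ) : Finset V :=
  {w | G.dist u w = k}

@[simp]
lemma mem_distSphere {u w : V} {k : ℕ} : w ∈ G.distSphere u k ↔ G.dist u w = k := by
  simp [distSphere]

lemma card_distSphere_succ_le [DecidableRel G.Adj] (hconn : G.Connected) {u : V} {k d : ℕ}
    (hk : 1 ≤ k) (hdeg : ∀ w ∈ G.distSphere u k, G.degree w = d) :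
    #(G.distSphere u (k + 1)) ≤ #(G.distSphere u k) * (d - 1) := by
  classical
  have hparent : ∀ v ∈ G.distSphere u (k + 1),
      1 ≤ #((G.distSphere u k).bipartiteAbove (fun v w => G.Adj w v) v) := by
    intro v hv
    obtain ⟨w, hwv, hw⟩ := hconn.exists_adj_dist_eq_of_dist_eq_succ (mem_distSphere.mp hv)
    exact one_le_card.mpr ⟨w, by simp [bipartiteAbove, hw, hwv]⟩
  have hchildren : ∀ w ∈ G.distSphere u k,
      #((G.distSphere u (k + 1)).bipartiteBelow (fun v w => G.Adj w v) w) ≤ d - 1 := by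
    intro w hw
    obtain ⟨x, hxw, hx⟩ :=
      hconn.exists_adj_dist_eq_of_dist_eq_succ (u := u) (v := w) (j := k - 1)
        (by rw [mem_distSphere] at hw; omega)
    have hsub : (G.distSphere u (k + 1)).bipartiteBelow (fun v w => G.Adj w v) w ⊆
        G.neighborFinset w \ {x} := by
      intro v hv
      simp only [bipartiteBelow, mem_filter, mem_distSphere] at hv
      simp only [mem_sdiff, mem_neighborFinset, mem_singleton]
      exact ⟨hv.2, by rintro rfl; omega⟩
    calc _ ≤ #(G.neighborFinset w \ {x}) := card_le_card hsub
      _ = d - 1 := by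
        rw [card_sdiff_of_subset (by simpa using hxw.symm), card_neighborFinset_eq_degree,
          hdeg w hw, card_singleton]
  simpa using card_mul_le_card_mul _ hparent hchildren

lemma card_distSphere_odd_le [DecidableRel G.Adj] (hconn : G.Connected) {u : V} {r s : ℕ}
    (hdeg_even : ∀ w, Even (G.dist u w) → G.degree w = r)
    (hdeg_odd : ∀ w, Odd (G.dist u w) → G.degree w = s) (i : ℕ) :
    #(G.distSphere u (2 * i + 1)) ≤ r * ((r - 1) * (s - 1)) ^ i := by
  induction i with
  | zero =>
    rw [pow_zero, mul_one]
    calc _ ≤ #(G.neighborFinset u) := card_le_card fun w hw => by simpa using hw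
      _ = r := by rw [card_neighborFinset_eq_degree, hdeg_even u (by simp)]
  | succ i ih =>
    have hodd := card_distSphere_succ_le hconn (k := 2 * i + 1) (d := s) (by omega)
      fun w hw => hdeg_odd w ⟨i, mem_distSphere.mp hw⟩
    have heven := card_distSphere_succ_le hconn (k := 2 * i + 2) (d := r) (by omega)
      fun w hw => hdeg_even w ⟨i + 1, by rw [mem_distSphere.mp hw]; ring⟩
    calc #(G.distSphere u (2 * (i + 1) + 1))
        ≤ #(G.distSphere u (2 * i + 1)) * (s - 1) * (r - 1) :=
          heven.trans (Nat.mul_le_mul_right _ hodd)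
      _ ≤ r * ((r - 1) * (s - 1)) ^ i * (s - 1) * (r - 1) := by gcongr
      _ = r * ((r - 1) * (s - 1)) ^ (i + 1) := by ring

lemma card_odd_dist_le_sum_card_distSphere (hconn : G.Connected) {m : ℕ}
    (hdiam : G.diam ≤ 2 * m) (u : V) :
    #{w | Odd (G.dist u w)} ≤ ∑ i ∈ range m, #(G.distSphere u (2 * i + 1)) := by
  classical
  have : Nonempty V := ⟨u⟩
  have hediam : G.ediam ≠ ⊤ := connected_iff_ediam_ne_top.mp hconn
  refine (card_le_card fun w hw => ?_).trans card_biUnion_le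
  obtain ⟨i, hi⟩ := (mem_filter.mp hw).2
  have := (dist_le_diam hediam (u := u) (v := w)).trans hdiam
  exact mem_biUnion.mpr ⟨i, mem_range.mpr (by omega), mem_distSphere.mpr hi⟩

end Spheres

end SimpleGraph

open SimpleGraph

theorem stmt_1_general {V : Type*} [Fintype V] (G : SimpleGraph V) (V1 V2 : Finset V)
    (hpart : ∀ v, (v ∈ V1 ∧ v ∉ V2) ∨ (v ∈ V2 ∧ v ∉ V1))
    (hbip : ∀ u v, G.Adj u v → (u ∈ V1 ∧ v ∈ V2) ∨ (u ∈ V2 ∧ v ∈ V1))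
    (r s m : ℕ) (hs : 2 ≤ s)
    (hdeg1 : ∀ v ∈ V1, (G.neighborSet v).ncard = r)
    (hdeg2 : ∀ v ∈ V2, (G.neighborSet v).ncard = s)
    (hconn : G.Connected) (hdiam : G.diam ≤ 2 * m) :
    V2.card ≤ r * ∑ i ∈ Finset.range m, ((r - 1) * (s - 1)) ^ i := by
  classical
  obtain hV2 | ⟨v, hv⟩ := V2.eq_empty_or_nonempty
  · simp [hV2]
  have hV1 : ∀ w, w ∈ V1 ↔ w ∉ V2 := fun w => by rcases hpart w with h | h <;> simp [h]
  let c : G.Coloring Bool := Coloring.mk (fun w => decide (w ∈ V1)) fun hadj => by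
    rcases hbip _ _ hadj with h | h <;> simp [h.1, h.2, hV1]
  obtain ⟨u, hvu⟩ : (G.neighborSet v).Nonempty :=
    Set.nonempty_of_ncard_ne_zero (by rw [hdeg2 v hv]; omega)
  have hu : u ∈ V1 := by rcases hbip v u hvu with h | h <;> simp_all
  have heven : ∀ w, Even (G.dist u w) ↔ w ∈ V1 := fun w => by
    simpa [c, Coloring.mk, hu] using hconn.even_dist_iff_congr c u w
  have hodd : ∀ w, Odd (G.dist u w) ↔ w ∈ V2 := fun w => by
    rw [← Nat.not_even_iff_odd, heven, hV1, not_not]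
  have hV2_odd : V2 = ({w | Odd (G.dist u w)} : Finset V) := by
    ext w; simp [hodd]
  calc #V2 ≤ ∑ i ∈ range m, #(G.distSphere u (2 * i + 1)) :=
        hV2_odd ▸ card_odd_dist_le_sum_card_distSphere hconn hdiam u
    _ ≤ ∑ i ∈ range m, r * ((r - 1) * (s - 1)) ^ i := by
        gcongr with i
        refine card_distSphere_odd_le hconn (fun w hw => ?_) (fun w hw => ?_) i
        · rw [← ncard_neighborSet_eq_degree, hdeg1 w ((heven w).mp hw)]
        · rw [← ncard_neighborSet_eq_degree, hdeg2 w ((hodd w).mp hw)]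
    _ = r * ∑ i ∈ range m, ((r - 1) * (s - 1)) ^ i := (mul_sum ..).symm

/-- Moore-type bound for the part `V2` of a bipartite biregular graph of
even diameter at most `2m`:  `|V2| ≤ r·∑_{i=0}^{m-1} ((r-1)(s-1))^i`. -/
theorem stmt_1 {V : Type*} [Fintype V] (G : SimpleGraph V) (V1 V2 : Finset V)
    (hpart : ∀ v, (v ∈ V1 ∧ v ∉ V2) ∨ (v ∈ V2 ∧ v ∉ V1))
    (hbip : ∀ u v, G.Adj u v → (u ∈ V1 ∧ v ∈ V2) ∨ (u ∈ V2 ∧ v ∈ V1))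
    (r s m : ℕ) (hr : 2 ≤ r) (hs : 2 ≤ s) (hm : 1 ≤ m)
    (hdeg1 : ∀ v ∈ V1, (G.neighborSet v).ncard = r)
    (hdeg2 : ∀ v ∈ V2, (G.neighborSet v).ncard = s)
    (hconn : G.Connected) (hdiam : G.diam ≤ 2 * m) :
    V2.card ≤ r * ∑ i ∈ Finset.range m, ((r - 1) * (s - 1)) ^ i :=
  stmt_1_general G V1 V2 hpart hbip r s m hs hdeg1 hdeg2 hconn hdiam
end

section
/- Let G be a bipartite graph with parts V1, V2, in which every vertex of V1 has degree r ≥ 2 and every vertex of V2 has degree s ≥ 2, and suppose G has diameter at most 2m+1 for some m ≥ 1. Then |V1| ≤ 1 + r(s-1) · ∑_{i=0}^{m-1} ((r-1)(s-1))^i. -/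
open SimpleGraph Finset

private lemma walk_parity_aux {V : Type*} (G : SimpleGraph V) (V1 V2 : Finset V)
    (hpart : ∀ v, (v ∈ V1 ∧ v ∉ V2) ∨ (v ∈ V2 ∧ v ∉ V1))
    (hbip : ∀ u v, G.Adj u v → (u ∈ V1 ∧ v ∈ V2) ∨ (u ∈ V2 ∧ v ∈ V1)) :
    ∀ {a b : V} (p : G.Walk a b), ((a ∈ V1 ↔ b ∈ V1) ↔ Even p.length) := by
  intro a b p
  induction p with
  | nil => simp
  | @cons a c b h q ih =>
    have hac : ¬ (a ∈ V1 ↔ c ∈ V1) := by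
      rcases hbip _ _ h with ⟨h1, h2⟩ | ⟨h1, h2⟩ <;>
        rcases hpart a with ⟨_, _⟩ | ⟨_, _⟩ <;> rcases hpart c with ⟨_, _⟩ | ⟨_, _⟩ <;> tauto
    rw [SimpleGraph.Walk.length_cons, Nat.even_add_one, ← ih]
    tauto

/-- Moore-type bound for the part `V1` of a bipartite biregular graph of
odd diameter at most `2m+1`:  `|V1| ≤ 1 + r(s-1)·∑_{i=0}^{m-1} ((r-1)(s-1))^i`. -/
theorem stmt_2 {V : Type*} [Fintype V] (G : SimpleGraph V) (V1 V2 : Finset V)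
    (hpart : ∀ v, (v ∈ V1 ∧ v ∉ V2) ∨ (v ∈ V2 ∧ v ∉ V1))
    (hbip : ∀ u v, G.Adj u v → (u ∈ V1 ∧ v ∈ V2) ∨ (u ∈ V2 ∧ v ∈ V1))
    (r s m : ℕ) (hr : 2 ≤ r) (hs : 2 ≤ s) (hm : 1 ≤ m)
    (hdeg1 : ∀ v ∈ V1, (G.neighborSet v).ncard = r)
    (hdeg2 : ∀ v ∈ V2, (G.neighborSet v).ncard = s)
    (hconn : G.Connected) (hdiam : G.diam ≤ 2 * m + 1) :
    V1.card ≤ 1 + r * (s - 1) * ∑ i ∈ Finset.range m, ((r - 1) * (s - 1)) ^ i := by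
  classical
  rcases V1.eq_empty_or_nonempty with hV1 | ⟨u, hu⟩
  · simp [hV1]
  -- the graph has finite ediam
  have hetop : G.ediam ≠ ⊤ := by
    have hV : Nonempty V := hconn.nonempty
    obtain ⟨p, hp⟩ := Finite.exists_max (fun p : V × V => G.edist p.1 p.2)
    have hle : G.ediam ≤ G.edist p.1 p.2 := by
      rw [ediam_def]; exact iSup_le hp
    intro h
    exact (edist_ne_top_iff_reachable.mpr (hconn.preconnected p.1 p.2))
      (top_le_iff.mp (h ▸ hle))
  have hdist : ∀ v, G.dist u v ≤ 2 * m + 1 := fun v => (G.dist_le_diam hetop).trans hdiam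
  -- membership by parity of distance
  have hmem : ∀ v : V, (v ∈ V1 ↔ Even (G.dist u v)) := by
    intro v
    obtain ⟨p, hp⟩ := (hconn.preconnected u v).exists_walk_length_eq_dist
    have := walk_parity_aux G V1 V2 hpart hbip p
    rw [hp] at this
    tauto
  -- distance spheres
  set S : ℕ → Finset V := fun d => Finset.univ.filter (fun v => G.dist u v = d) with hS
  have hSmem : ∀ d v, v ∈ S d ↔ G.dist u v = d := by
    intro d v; simp [hS]
  -- a vertex at distance d+1 has a neighbor at distance d
  have prev : ∀ (d : ℕ) (v : V), G.dist u v = d + 1 → ∃ w, G.Adj w v ∧ G.dist u w = d := by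
    intro d v hv
    obtain ⟨p, hp⟩ := (hconn.preconnected u v).exists_walk_length_eq_dist
    rw [hv] at hp
    have hq : p.reverse.length = d + 1 := by simp [hp]
    cases hrev : p.reverse with
    | nil => rw [hrev] at hq; simp at hq
    | @cons _ w _ h q =>
      rw [hrev] at hq
      simp only [SimpleGraph.Walk.length_cons, Nat.add_right_cancel_iff] at hq
      refine ⟨w, h.symm, ?_⟩
      have h1 : G.dist u w ≤ d := by
        have := G.dist_le q.reverse
        simpa [hq] using this
      have h2 : d ≤ G.dist u w := by
        have ht := hconn.dist_triangle (u := u) (v := w) (w := v)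
        have hwv : G.dist w v ≤ 1 := by
          have := G.dist_le (SimpleGraph.Walk.cons h.symm SimpleGraph.Walk.nil)
          simpa using this
        omega
      omega
  -- generic sphere growth bound
  have key : ∀ (d k : ℕ), 1 ≤ d →
      (∀ w, G.dist u w = d → (G.neighborSet w).ncard = k) →
      (S (d+1)).card ≤ (k - 1) * (S d).card := by
    intro d k hd hdeg
    have hsub : S (d+1) ⊆ (S d).biUnion
        (fun w => (G.neighborSet w).toFinset ∩ S (d+1)) := by
      intro v hv
      rw [hSmem] at hv
      obtain ⟨w, hadj, hw⟩ := prev d v hv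
      refine Finset.mem_biUnion.mpr ⟨w, (hSmem d w).mpr hw, ?_⟩
      rw [Finset.mem_inter, Set.mem_toFinset]
      exact ⟨hadj, (hSmem _ v).mpr hv⟩
    calc (S (d+1)).card ≤ _ := Finset.card_le_card hsub
      _ ≤ ∑ w ∈ S d, ((G.neighborSet w).toFinset ∩ S (d+1)).card :=
          Finset.card_biUnion_le
      _ ≤ ∑ _w ∈ S d, (k - 1) := by
          apply Finset.sum_le_sum
          intro w hw
          rw [hSmem] at hw
          obtain ⟨d', rfl⟩ : ∃ d', d = d' + 1 := ⟨d - 1, by omega⟩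
          obtain ⟨w', hadj', hw'⟩ := prev d' w hw
          have hmemN : w' ∈ (G.neighborSet w).toFinset := by
            rw [Set.mem_toFinset]; exact hadj'.symm
          have hnot : w' ∉ S (d' + 1 + 1) := by
            rw [hSmem]; omega
          have hsub2 : (G.neighborSet w).toFinset ∩ S (d' + 1 + 1) ⊆
              ((G.neighborSet w).toFinset).erase w' := by
            intro x hx
            rw [Finset.mem_inter] at hx
            rw [Finset.mem_erase]
            exact ⟨fun hxe => hnot (hxe ▸ hx.2), hx.1⟩
          have hcardN : ((G.neighborSet w).toFinset).card = k := by
            rw [← Set.ncard_eq_toFinset_card']; exact hdeg w hw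
          calc _ ≤ (((G.neighborSet w).toFinset).erase w').card :=
                Finset.card_le_card hsub2
            _ = k - 1 := by rw [Finset.card_erase_of_mem hmemN, hcardN]
      _ = (k - 1) * (S d).card := by rw [Finset.sum_const, smul_eq_mul, mul_comm]
  -- degrees on spheres
  have hdegS : ∀ d w, G.dist u w = d →
      (G.neighborSet w).ncard = (if Even d then r else s) := by
    intro d w hw
    by_cases he : Even d
    · rw [if_pos he]
      exact hdeg1 w ((hmem w).mpr (hw ▸ he))
    · rw [if_neg he]
      have : w ∉ V1 := fun h => he (hw ▸ ((hmem w).mp h))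
      rcases hpart w with ⟨h1, _⟩ | ⟨h1, _⟩
      · exact absurd h1 this
      · exact hdeg2 w h1
  -- sphere 1 bound
  have hS1 : (S 1).card ≤ r := by
    have hsub : S 1 ⊆ (G.neighborSet u).toFinset := by
      intro v hv
      rw [hSmem] at hv
      rw [Set.mem_toFinset]
      exact (SimpleGraph.dist_eq_one_iff_adj.mp hv)
    calc (S 1).card ≤ _ := Finset.card_le_card hsub
      _ = r := by rw [← Set.ncard_eq_toFinset_card']; exact hdeg1 u hu
  -- even sphere bounds
  have heven : ∀ k : ℕ, 1 ≤ k →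
      (S (2*k)).card ≤ r * (s - 1) * ((r - 1) * (s - 1)) ^ (k - 1) := by
    intro k hk
    induction k, hk using Nat.le_induction with
    | base =>
      have h2 : (S 2).card ≤ (s - 1) * (S 1).card := by
        have := key 1 s (le_refl 1) (fun w hw => by
          have := hdegS 1 w hw; simpa using this)
        exact this
      have := h2.trans (Nat.mul_le_mul_left (s-1) hS1)
      simpa [mul_comm] using this
    | succ k hk ih =>
      have hodd : (S (2*k+1)).card ≤ (r - 1) * (S (2*k)).card := by
        apply key (2*k) r (by omega)
        intro w hw
        have := hdegS (2*k) w hw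
        simpa [Nat.even_mul] using this
      have hev : (S (2*k+2)).card ≤ (s - 1) * (S (2*k+1)).card := by
        apply key (2*k+1) s (by omega)
        intro w hw
        have := hdegS (2*k+1) w hw
        have hne : ¬ Even (2*k+1) := by simp [Nat.even_add_one, Nat.even_mul]
        rwa [if_neg hne] at this
      have h1 : (S (2*(k+1))).card ≤ (s-1) * ((r-1) * (S (2*k)).card) := by
        have : 2*(k+1) = 2*k+2 := by ring
        rw [this]
        exact hev.trans (Nat.mul_le_mul_left _ hodd)
      calc (S (2*(k+1))).card ≤ (s-1) * ((r-1) * (S (2*k)).card) := h1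
        _ ≤ (s-1) * ((r-1) * (r * (s - 1) * ((r - 1) * (s - 1)) ^ (k - 1))) := by
            apply Nat.mul_le_mul_left
            apply Nat.mul_le_mul_left
            exact ih
        _ = r * (s - 1) * ((r - 1) * (s - 1)) ^ (k + 1 - 1) := by
            obtain ⟨k', rfl⟩ : ∃ k', k = k' + 1 := ⟨k - 1, by omega⟩
            simp only [Nat.add_sub_cancel]
            ring
  -- cover V1
  have hcover : V1 ⊆ insert u ((Finset.range m).biUnion (fun i => S (2*(i+1)))) := by
    intro v hv
    have hev : Even (G.dist u v) := (hmem v).mp hv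
    have hle : G.dist u v ≤ 2 * m := by
      have := hdist v
      rcases hev with ⟨c, hc⟩
      omega
    by_cases h0 : G.dist u v = 0
    · have : u = v := (hconn.dist_eq_zero_iff).mp h0
      exact Finset.mem_insert.mpr (Or.inl this.symm)
    · obtain ⟨c, hc⟩ := hev
      have hc1 : 1 ≤ c := by omega
      refine Finset.mem_insert.mpr (Or.inr (Finset.mem_biUnion.mpr ⟨c - 1, ?_, ?_⟩))
      · rw [Finset.mem_range]; omega
      · rw [hSmem]; omega
  calc V1.card ≤ _ := Finset.card_le_card hcover
    _ ≤ 1 + ((Finset.range m).biUnion (fun i => S (2*(i+1)))).card := by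
        apply (Finset.card_insert_le _ _).trans
        omega
    _ ≤ 1 + ∑ i ∈ Finset.range m, (S (2*(i+1))).card := by
        have := Finset.card_biUnion_le
          (s := Finset.range m) (t := fun i => S (2*(i+1)))
        omega
    _ ≤ 1 + ∑ i ∈ Finset.range m, r * (s - 1) * ((r - 1) * (s - 1)) ^ i := by
        apply Nat.add_le_add_left
        apply Finset.sum_le_sum
        intro i _
        have := heven (i+1) (by omega)
        simpa using this
    _ = 1 + r * (s - 1) * ∑ i ∈ Finset.range m, ((r - 1) * (s - 1)) ^ i := by
        rw [Finset.mul_sum]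
end

section
/- Let r > s ≥ 2, and let G be a bipartite graph with parts V1 (all vertices of degree r) and V2 (all vertices of degree s) and diameter at most 2m+1. Set ρ = r/gcd(r,s), σ = s/gcd(r,s), and N2' = 1 + s(r-1)·∑_{i=0}^{m-1}((r-1)(s-1))^i. Then |V2| ≤ ⌊N2'/ρ⌋·ρ and |V1| ≤ ⌊N2'/ρ⌋·σ, so the total order satisfies |V1|+|V2| ≤ ⌊N2'/ρ⌋·(ρ+σ). -/
/-!
Fix `u ∈ V₂`. By bipartiteness, a vertex lies in `V₂` exactly when its distance from `u` is even,
so the degrees along a breadth-first search from `u` alternate `s, r, s, r, …`. Every vertex of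
a sphere of radius `d ≥ 1` has a neighbour one step closer to `u`, so it has at most
`deg - 1` neighbours on the next sphere; hence the sphere of radius `2k + 2` has at most
`s (r-1) ((r-1)(s-1))^k` vertices. As the diameter is at most `2m + 1`, `V₂` lies in the spheres
of even radius `≤ 2m`, which gives `|V₂| ≤ N₂'`. Double counting edges gives `r |V₁| = s |V₂|`, so
`|V₂| = kρ` and `|V₁| = kσ` for some `k`, and `kρ ≤ N₂'` forces `k ≤ ⌊N₂'/ρ⌋`.
-/
open Finset

namespace SimpleGraph

variable {V : Type*} {G : SimpleGraph V} {u v : V}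

section Bipartite

variable {s t : Set V}

lemma IsBipartiteWith.even_length_iff (h : G.IsBipartiteWith s t) (p : G.Walk u v) :
    Even p.length ↔ (u ∈ t ↔ v ∈ t) := by
  classical
  let c : G.Coloring Bool := Coloring.mk (fun x ↦ decide (x ∈ t)) fun {x y} hxy ↦ by
    rcases h.mem_of_adj hxy with ⟨hx, hy⟩ | ⟨hx, hy⟩
    · simp [hy, Set.disjoint_left.mp h.disjoint hx]
    · simp [hx, Set.disjoint_left.mp h.disjoint hy]
  simpa [c, Coloring.mk] using c.even_length_iff_congr p

lemma IsBipartiteWith.even_dist_iff (h : G.IsBipartiteWith s t) (huv : G.Reachable u v) :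
    Even (G.dist u v) ↔ (u ∈ t ↔ v ∈ t) := by
  obtain ⟨p, hp⟩ := huv.exists_walk_length_eq_dist
  rw [← hp, h.even_length_iff p]

end Bipartite

section Sphere

variable {d : ℕ}

lemma exists_adj_dist_eq_of_dist_eq_add_one (h : G.dist u v = d + 1) :
    ∃ w, G.Adj w v ∧ G.dist u w = d := by
  obtain ⟨p, hp⟩ := exists_walk_of_dist_ne_zero (G := G) (u := v) (v := u)
    (by rw [G.dist_comm, h]; omega)
  rw [G.dist_comm, h] at hp
  cases p with
  | nil => simp at hp
  | @cons _ w _ hvw q =>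
    refine ⟨w, hvw.symm, ?_⟩
    have hle : G.dist w u ≤ d := by
      simpa [show q.length = d by simpa using hp] using dist_le q
    have hge : G.dist u v ≤ G.dist u w + G.dist w v := hvw.symm.reachable.dist_triangle_right u
    rw [G.dist_comm (u := w), dist_eq_one_iff_adj.mpr hvw] at hge
    rw [G.dist_comm] at hle
    omega

variable [Fintype V]

noncomputable def sphere (G : SimpleGraph V) (u : V) (d : ℕ) : Finset V := {v | G.dist u v = d}

@[simp]
lemma mem_sphere : v ∈ G.sphere u d ↔ G.dist u v = d := by simp [sphere]

lemma sphere_zero (hG : G.Connected) (u : V) : G.sphere u 0 = {u} := by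
  ext v; simp [hG.dist_eq_zero_iff, eq_comm]

lemma sphere_one [DecidableRel G.Adj] (u : V) : G.sphere u 1 = G.neighborFinset u := by
  ext v; simp

/-- Every vertex at distance `d + 1` has a neighbour at distance `d`, and every vertex at distance
`d ≥ 1` has a neighbour at distance `d - 1`, which is not at distance `d + 1`. -/
lemma card_sphere_succ_le [DecidableRel G.Adj] {k : ℕ} (hd : d ≠ 0)
    (hdeg : ∀ v ∈ G.sphere u d, G.degree v = k) :
    #(G.sphere u (d + 1)) ≤ #(G.sphere u d) * (k - 1) := by
  classical
  set up : V → Finset V := fun v ↦ {w ∈ G.neighborFinset v | G.dist u w = d + 1}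
  have hcover : G.sphere u (d + 1) ⊆ (G.sphere u d).biUnion up := by
    intro w hw
    obtain ⟨x, hxw, hx⟩ := exists_adj_dist_eq_of_dist_eq_add_one (mem_sphere.mp hw)
    simp only [mem_biUnion, mem_sphere, up, mem_filter, mem_neighborFinset]
    exact ⟨x, hx, hxw, mem_sphere.mp hw⟩
  have hup : ∀ v ∈ G.sphere u d, #(up v) ≤ k - 1 := by
    intro v hv
    obtain ⟨x, hxv, hx⟩ := exists_adj_dist_eq_of_dist_eq_add_one (d := d - 1)
      (by rw [mem_sphere.mp hv]; omega)
    have hsub : up v ⊆ (G.neighborFinset v).erase x := by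
      intro y hy
      simp only [up, mem_filter] at hy
      exact mem_erase.mpr ⟨by rintro rfl; omega, hy.1⟩
    calc #(up v) ≤ #((G.neighborFinset v).erase x) := card_le_card hsub
      _ = k - 1 := by
        rw [card_erase_of_mem ((mem_neighborFinset _ _ _).mpr hxv.symm),
          card_neighborFinset_eq_degree, hdeg v hv]
  calc #(G.sphere u (d + 1)) ≤ ∑ v ∈ G.sphere u d, #(up v) :=
        (card_le_card hcover).trans card_biUnion_le
    _ ≤ #(G.sphere u d) * (k - 1) := by simpa using sum_le_sum hup

end Sphere

section Alternating

variable [Fintype V] [DecidableRel G.Adj] {r s : ℕ}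

lemma card_sphere_two_mul_add_two_le (hdeg : ∀ v, G.degree v = if Even (G.dist u v) then s else r)
    (k : ℕ) : #(G.sphere u (2 * k + 2)) ≤ s * (r - 1) * ((r - 1) * (s - 1)) ^ k := by
  have hdeg_sphere (d : ℕ) : ∀ v ∈ G.sphere u d, G.degree v = if Even d then s else r := by
    intro v hv; rw [hdeg v, mem_sphere.mp hv]
  have hodd (j : ℕ) : #(G.sphere u (2 * j + 2)) ≤ #(G.sphere u (2 * j + 1)) * (r - 1) :=
    card_sphere_succ_le (by omega) (by simpa [parity_simps] using hdeg_sphere (2 * j + 1))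
  have heven (j : ℕ) : #(G.sphere u (2 * j + 3)) ≤ #(G.sphere u (2 * j + 2)) * (s - 1) :=
    card_sphere_succ_le (by omega) (by simpa [parity_simps] using hdeg_sphere (2 * j + 2))
  induction k with
  | zero =>
    have hS1 : #(G.sphere u 1) = s := by
      simpa [sphere_one, card_neighborFinset_eq_degree] using hdeg u
    simpa [hS1] using hodd 0
  | succ k ih =>
    calc #(G.sphere u (2 * (k + 1) + 2)) ≤ #(G.sphere u (2 * k + 3)) * (r - 1) := hodd (k + 1)
      _ ≤ #(G.sphere u (2 * k + 2)) * (s - 1) * (r - 1) := by gcongr; exact heven k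
      _ ≤ s * (r - 1) * ((r - 1) * (s - 1)) ^ k * (s - 1) * (r - 1) := by gcongr
      _ = s * (r - 1) * ((r - 1) * (s - 1)) ^ (k + 1) := by ring

lemma card_filter_even_dist_le (hG : G.Connected)
    (hdeg : ∀ v, G.degree v = if Even (G.dist u v) then s else r) {m : ℕ}
    (hdiam : ∀ v, G.dist u v ≤ 2 * m + 1) :
    #{v | Even (G.dist u v)} ≤ 1 + s * (r - 1) * ∑ i ∈ range m, ((r - 1) * (s - 1)) ^ i := by
  classical
  have hcover : ({v | Even (G.dist u v)} : Finset V) ⊆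
      (range (m + 1)).biUnion (G.sphere u <| 2 * ·) := by
    intro v hv
    obtain ⟨j, hj⟩ := (mem_filter.mp hv).2
    have := hdiam v
    exact mem_biUnion.mpr ⟨j, mem_range.mpr (by omega), mem_sphere.mpr (by omega)⟩
  calc #{v | Even (G.dist u v)} ≤ ∑ j ∈ range (m + 1), #(G.sphere u (2 * j)) :=
        (card_le_card hcover).trans card_biUnion_le
    _ = ∑ j ∈ range m, #(G.sphere u (2 * j + 2)) + #(G.sphere u 0) := sum_range_succ' _ _
    _ ≤ ∑ j ∈ range m, s * (r - 1) * ((r - 1) * (s - 1)) ^ j + 1 := by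
        gcongr with j
        · exact card_sphere_two_mul_add_two_le hdeg j
        · simp [sphere_zero hG]
    _ = 1 + s * (r - 1) * ∑ i ∈ range m, ((r - 1) * (s - 1)) ^ i := by rw [mul_sum, add_comm]

end Alternating

section BiregularBipartite

variable [Fintype V] [DecidableRel G.Adj] {A B : Finset V} {r s : ℕ}

lemma IsBipartiteWith.mul_card_eq_mul_card (h : G.IsBipartiteWith A B)
    (hA : ∀ v ∈ A, G.degree v = r) (hB : ∀ v ∈ B, G.degree v = s) : r * #A = s * #B := by
  have := isBipartiteWith_sum_degrees_eq h
  rwa [sum_congr rfl hA, sum_congr rfl hB, sum_const, sum_const, smul_eq_mul, smul_eq_mul,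
    mul_comm #A, mul_comm #B] at this

lemma IsBipartiteWith.card_right_le_of_diam_le (h : G.IsBipartiteWith A B)
    (hAB : ∀ v, v ∈ A ∨ v ∈ B) (hA : ∀ v ∈ A, G.degree v = r) (hB : ∀ v ∈ B, G.degree v = s)
    (hG : G.Connected) {m : ℕ} (hdiam : G.diam ≤ 2 * m + 1) :
    #B ≤ 1 + s * (r - 1) * ∑ i ∈ range m, ((r - 1) * (s - 1)) ^ i := by
  obtain rfl | ⟨u, hu⟩ := B.eq_empty_or_nonempty
  · simp
  have hparity (v : V) : Even (G.dist u v) ↔ v ∈ B := by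
    simpa [hu] using h.even_dist_iff (hG u v)
  have hdeg (v : V) : G.degree v = if Even (G.dist u v) then s else r := by
    split_ifs with hv <;> rw [hparity] at hv
    · exact hB v hv
    · exact hA v ((hAB v).resolve_right hv)
  have : Nonempty V := ⟨u⟩
  have hdist (v : V) : G.dist u v ≤ 2 * m + 1 :=
    (dist_le_diam (connected_iff_ediam_ne_top.mp hG)).trans hdiam
  calc #B ≤ #{v | Even (G.dist u v)} := card_le_card fun v hv ↦ by simp [hparity, hv]
    _ ≤ _ := card_filter_even_dist_le hG hdeg hdist

end BiregularBipartite

end SimpleGraph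

lemma Nat.exists_eq_mul_div_gcd_of_mul_eq_mul {r s a b : ℕ} (hr : 0 < r) (h : r * a = s * b) :
    ∃ k, a = k * (s / r.gcd s) ∧ b = k * (r / r.gcd s) := by
  have hg : 0 < r.gcd s := Nat.gcd_pos_of_pos_left s hr
  have hρ : 0 < r / r.gcd s := Nat.div_pos (Nat.gcd_le_left s hr) hg
  have hred : r / r.gcd s * a = s / r.gcd s * b := by
    apply Nat.eq_of_mul_eq_mul_right hg
    rw [mul_right_comm, Nat.div_mul_cancel (Nat.gcd_dvd_left r s), h, mul_right_comm,
      Nat.div_mul_cancel (Nat.gcd_dvd_right r s)]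
  obtain ⟨k, hk⟩ : r / r.gcd s ∣ b :=
    (Nat.coprime_div_gcd_div_gcd hg).dvd_of_dvd_mul_left ⟨a, hred.symm⟩
  refine ⟨k, Nat.eq_of_mul_eq_mul_left hρ ?_, by rw [hk, mul_comm]⟩
  rw [hred, hk]; ring

open SimpleGraph

theorem stmt_3_general {V : Type*} [Fintype V] (G : SimpleGraph V) (V1 V2 : Finset V)
    (hpart : ∀ v, (v ∈ V1 ∧ v ∉ V2) ∨ (v ∈ V2 ∧ v ∉ V1))
    (hbip : ∀ u v, G.Adj u v → (u ∈ V1 ∧ v ∈ V2) ∨ (u ∈ V2 ∧ v ∈ V1))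
    (r s m : ℕ) (hrs : s < r)
    (hdeg1 : ∀ v ∈ V1, (G.neighborSet v).ncard = r)
    (hdeg2 : ∀ v ∈ V2, (G.neighborSet v).ncard = s)
    (hconn : G.Connected) (hdiam : G.diam ≤ 2 * m + 1) :
    let ρ := r / Nat.gcd r s
    let σ := s / Nat.gcd r s
    let N2' := 1 + s * (r - 1) * ∑ i ∈ Finset.range m, ((r - 1) * (s - 1)) ^ i
    V2.card ≤ (N2' / ρ) * ρ ∧ V1.card ≤ (N2' / ρ) * σ ∧
      V1.card + V2.card ≤ (N2' / ρ) * (ρ + σ) := by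
  classical
  intro ρ σ N2'
  have hB : G.IsBipartiteWith V1 V2 :=
    ⟨Set.disjoint_left.mpr fun v h1 h2 ↦ by rcases hpart v with h | h <;> simp_all,
      fun u v huv ↦ by simpa using hbip u v huv⟩
  have hdeg (v : V) : G.degree v = (G.neighborSet v).ncard := by
    rw [← card_neighborFinset_eq_degree, ← Set.ncard_coe_finset, coe_neighborFinset]
  have hdeg1' (v : V) (hv : v ∈ V1) : G.degree v = r := (hdeg v).trans (hdeg1 v hv)
  have hdeg2' (v : V) (hv : v ∈ V2) : G.degree v = s := (hdeg v).trans (hdeg2 v hv)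
  have hV2 : #V2 ≤ N2' := hB.card_right_le_of_diam_le (fun v ↦ (hpart v).imp And.left And.left)
    hdeg1' hdeg2' hconn hdiam
  have hr : 0 < r := by omega
  obtain ⟨k, hV1k, hV2k⟩ :=
    Nat.exists_eq_mul_div_gcd_of_mul_eq_mul hr (hB.mul_card_eq_mul_card hdeg1' hdeg2')
  have hk : k ≤ N2' / ρ :=
    (Nat.le_div_iff_mul_le (Nat.div_pos (Nat.gcd_le_left s hr) (Nat.gcd_pos_of_pos_left s hr))).mpr
      (hV2k ▸ hV2)
  rw [hV1k, hV2k]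
  refine ⟨Nat.mul_le_mul_right _ hk, Nat.mul_le_mul_right _ hk, ?_⟩
  rw [← mul_add, add_comm]
  exact Nat.mul_le_mul_right _ hk

/-- Refined Moore bounds for bipartite biregular graphs of odd diameter
`2m+1` with degrees `r > s ≥ 2`.  With `ρ = r/gcd(r,s)`, `σ = s/gcd(r,s)` and
`N2' = 1 + s(r-1)·∑_{i=0}^{m-1}((r-1)(s-1))^i`, one has `|V2| ≤ ⌊N2'/ρ⌋·ρ`,
`|V1| ≤ ⌊N2'/ρ⌋·σ`, and `|V1|+|V2| ≤ ⌊N2'/ρ⌋·(ρ+σ)`. -/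
theorem stmt_3 {V : Type*} [Fintype V] (G : SimpleGraph V) (V1 V2 : Finset V)
    (hpart : ∀ v, (v ∈ V1 ∧ v ∉ V2) ∨ (v ∈ V2 ∧ v ∉ V1))
    (hbip : ∀ u v, G.Adj u v → (u ∈ V1 ∧ v ∈ V2) ∨ (u ∈ V2 ∧ v ∈ V1))
    (r s m : ℕ) (hs : 2 ≤ s) (hrs : s < r) (hm : 1 ≤ m)
    (hdeg1 : ∀ v ∈ V1, (G.neighborSet v).ncard = r)
    (hdeg2 : ∀ v ∈ V2, (G.neighborSet v).ncard = s)
    (hconn : G.Connected) (hdiam : G.diam ≤ 2 * m + 1) :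
    let ρ := r / Nat.gcd r s
    let σ := s / Nat.gcd r s
    let N2' := 1 + s * (r - 1) * ∑ i ∈ Finset.range m, ((r - 1) * (s - 1)) ^ i
    V2.card ≤ (N2' / ρ) * ρ ∧ V1.card ≤ (N2' / ρ) * σ ∧
      V1.card + V2.card ≤ (N2' / ρ) * (ρ + σ) :=
  stmt_3_general G V1 V2 hpart hbip r s m hrs hdeg1 hdeg2 hconn hdiam
end

section
/- Let r > s ≥ 2 with ρ = r/gcd(r,s) dividing s-1. Then there is no bipartite biregular graph of degrees (r,s) and diameter 3 whose order attains the Moore bound M(r,s;3) = ⌊(1+s(r-1))/ρ⌋·(ρ+σ); in particular any such graph has |V2| ≤ 1 + s(r-1) - ρ. -/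
set_option linter.unusedSectionVars false

section Aux

variable {V : Type*} [Fintype V] [DecidableEq V] (G : SimpleGraph V) [DecidableRel G.Adj]

/-- Double counting common neighbours from a fixed vertex on the `B` side. -/
lemma sum_common_nb (A B : Finset V) (r s : ℕ)
    (hside : ∀ u v, G.Adj u v → (u ∈ A ∧ v ∈ B) ∨ (u ∈ B ∧ v ∈ A))
    (hdisj : ∀ v, v ∈ A → v ∉ B)
    (hdA : ∀ v ∈ A, (G.neighborFinset v).card = r)
    (hdB : ∀ v ∈ B, (G.neighborFinset v).card = s)
    {v : V} (hv : v ∈ B) :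
    ∑ u ∈ B.erase v, (G.neighborFinset v ∩ G.neighborFinset u).card = s * (r - 1) := by
  have hvA : ∀ w, G.Adj v w → w ∈ A := by
    intro w hw
    rcases hside v w hw with ⟨h1, _⟩ | ⟨_, h2⟩
    · exact absurd hv (hdisj v h1)
    · exact h2
  have hstep : ∀ u ∈ B.erase v,
      (G.neighborFinset v ∩ G.neighborFinset u).card
        = ∑ w ∈ G.neighborFinset v, if G.Adj u w then 1 else 0 := by
    intro u _
    rw [← Finset.card_filter]
    congr 1
    ext w
    simp [SimpleGraph.mem_neighborFinset, G.adj_comm u w, and_comm]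
  rw [Finset.sum_congr rfl hstep, Finset.sum_comm]
  have hinner : ∀ w ∈ G.neighborFinset v,
      (∑ u ∈ B.erase v, if G.Adj u w then 1 else 0) = r - 1 := by
    intro w hw
    rw [← Finset.card_filter]
    have hwv : G.Adj v w := (SimpleGraph.mem_neighborFinset _ _ _).1 hw
    have hwA : w ∈ A := hvA w hwv
    have hset : (B.erase v).filter (fun u => G.Adj u w) = (G.neighborFinset w).erase v := by
      ext u
      simp only [Finset.mem_filter, Finset.mem_erase, SimpleGraph.mem_neighborFinset]
      constructor
      · rintro ⟨⟨hne, _⟩, hadj⟩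
        exact ⟨hne, hadj.symm⟩
      · rintro ⟨hne, hadj⟩
        have huB : u ∈ B := by
          rcases hside w u hadj with ⟨_, h2⟩ | ⟨h1, _⟩
          · exact h2
          · exact absurd hwA (fun h => hdisj w h h1)
        exact ⟨⟨hne, huB⟩, hadj.symm⟩
    rw [hset, Finset.card_erase_of_mem ((SimpleGraph.mem_neighborFinset _ _ _).2 hwv.symm),
      hdA w hwA]
  rw [Finset.sum_congr rfl hinner, Finset.sum_const, smul_eq_mul, hdB v hv]

/-- Edge counting: `|A| * r = |B| * s`. -/
lemma edge_count (A B : Finset V) (r s : ℕ)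
    (hside : ∀ u v, G.Adj u v → (u ∈ A ∧ v ∈ B) ∨ (u ∈ B ∧ v ∈ A))
    (hdisj : ∀ v, v ∈ A → v ∉ B)
    (hdA : ∀ v ∈ A, (G.neighborFinset v).card = r)
    (hdB : ∀ v ∈ B, (G.neighborFinset v).card = s) :
    A.card * r = B.card * s := by
  have h1 : ∀ u ∈ A, (G.neighborFinset u).card
      = ∑ w ∈ B, if G.Adj u w then 1 else 0 := by
    intro u hu
    rw [← Finset.card_filter]
    congr 1
    ext w
    simp only [SimpleGraph.mem_neighborFinset, Finset.mem_filter]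
    constructor
    · intro h
      refine ⟨?_, h⟩
      rcases hside u w h with ⟨_, h2⟩ | ⟨h1', _⟩
      · exact h2
      · exact absurd hu (fun h' => hdisj u h' h1')
    · exact fun h => h.2
  calc A.card * r = ∑ u ∈ A, (G.neighborFinset u).card := by
        rw [Finset.sum_congr rfl hdA, Finset.sum_const, smul_eq_mul]
    _ = ∑ u ∈ A, ∑ w ∈ B, if G.Adj u w then 1 else 0 := Finset.sum_congr rfl h1
    _ = ∑ w ∈ B, ∑ u ∈ A, if G.Adj u w then 1 else 0 := Finset.sum_comm
    _ = ∑ w ∈ B, (G.neighborFinset w).card := by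
        refine Finset.sum_congr rfl fun w hw => ?_
        rw [← Finset.card_filter]
        congr 1
        ext u
        simp only [Finset.mem_filter, SimpleGraph.mem_neighborFinset]
        constructor
        · exact fun h => h.2.symm
        · intro h
          refine ⟨?_, h.symm⟩
          rcases hside w u h with ⟨h1', _⟩ | ⟨_, h2⟩
          · exact absurd hw (hdisj w h1')
          · exact h2
    _ = B.card * s := by rw [Finset.sum_congr rfl hdB, Finset.sum_const, smul_eq_mul]

lemma walk_parity (V1 V2 : Finset V)
    (hpart : ∀ v, (v ∈ V1 ∧ v ∉ V2) ∨ (v ∈ V2 ∧ v ∉ V1))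
    (hbip : ∀ u v, G.Adj u v → (u ∈ V1 ∧ v ∈ V2) ∨ (u ∈ V2 ∧ v ∈ V1)) :
    ∀ {u v : V} (p : G.Walk u v),
      (p.length : ZMod 2) = (if u ∈ V2 then 1 else 0) + (if v ∈ V2 then 1 else 0) := by
  intro u v p
  induction p with
  | @nil a =>
    by_cases h : a ∈ V2 <;> simp [h] <;> decide
  | @cons u w v h p ih =>
    have hmem : (u ∉ V2 ∧ w ∈ V2) ∨ (u ∈ V2 ∧ w ∉ V2) := by
      rcases hbip u w h with ⟨hu1, hw2⟩ | ⟨hu2, hw1⟩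
      · refine Or.inl ⟨?_, hw2⟩
        rcases hpart u with ⟨_, h2⟩ | ⟨_, h2⟩
        · exact h2
        · exact absurd hu1 h2
      · refine Or.inr ⟨hu2, ?_⟩
        rcases hpart w with ⟨_, h2⟩ | ⟨_, h2⟩
        · exact h2
        · exact absurd hw1 h2
    simp only [SimpleGraph.Walk.length_cons, Nat.cast_add, Nat.cast_one, ih]
    rcases hmem with ⟨hu, hw⟩ | ⟨hu, hw⟩ <;>
      by_cases hv : v ∈ V2 <;> simp [hu, hw, hv] <;> decide

lemma common_nb (V1 V2 : Finset V)
    (hpart : ∀ v, (v ∈ V1 ∧ v ∉ V2) ∨ (v ∈ V2 ∧ v ∉ V1))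
    (hbip : ∀ u v, G.Adj u v → (u ∈ V1 ∧ v ∈ V2) ∨ (u ∈ V2 ∧ v ∈ V1))
    (hconn : G.Connected) (hdiam : G.diam = 3) {u v : V} (hne : u ≠ v)
    (hside : u ∈ V2 ↔ v ∈ V2) :
    ∃ w, G.Adj u w ∧ G.Adj v w := by
  obtain ⟨p, hp⟩ := (hconn.preconnected u v).exists_walk_length_eq_dist
  have hnt : G.ediam ≠ ⊤ :=
    G.ediam_ne_top_of_diam_ne_zero (by rw [hdiam]; norm_num)
  have hle : G.dist u v ≤ 3 := hdiam ▸ G.dist_le_diam hnt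
  have hne0 : G.dist u v ≠ 0 :=
    Nat.pos_iff_ne_zero.mp (hconn.pos_dist_of_ne hne)
  have heven : Even p.length := by
    have hpar := walk_parity G V1 V2 hpart hbip p
    have hz : (p.length : ZMod 2) = 0 := by
      by_cases h : u ∈ V2
      · rw [hpar, if_pos h, if_pos (hside.1 h)]; decide
      · rw [hpar, if_neg h, if_neg (fun h' => h (hside.2 h'))]; decide
    exact even_iff_two_dvd.2 ((ZMod.natCast_eq_zero_iff p.length 2).1 hz)
  have hl2 : p.length = 2 := by
    obtain ⟨k, hk⟩ := heven
    omega
  clear hp heven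
  cases p with
  | nil => simp at hl2
  | cons ha q =>
    cases q with
    | nil => simp at hl2
    | cons hb q' =>
      cases q' with
      | nil => exact ⟨_, ha, hb.symm⟩
      | cons hc q'' => simp [SimpleGraph.Walk.length_cons] at hl2

end Aux

/-- Let `r > s ≥ 2` with `ρ = r/gcd(r,s)` dividing `s-1`.  Then no
bipartite biregular graph of degrees `(r,s)` and diameter `3` attains the Moore bound
`⌊(1+s(r-1))/ρ⌋·(ρ+σ)`; moreover any such graph has `|V2| ≤ 1 + s(r-1) - ρ`. -/
theorem stmt_5 {V : Type*} [Fintype V] (G : SimpleGraph V) (V1 V2 : Finset V)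
    (hpart : ∀ v, (v ∈ V1 ∧ v ∉ V2) ∨ (v ∈ V2 ∧ v ∉ V1))
    (hbip : ∀ u v, G.Adj u v → (u ∈ V1 ∧ v ∈ V2) ∨ (u ∈ V2 ∧ v ∈ V1))
    (r s : ℕ) (hs : 2 ≤ s) (hrs : s < r)
    (hdvd : (r / Nat.gcd r s) ∣ (s - 1))
    (hdeg1 : ∀ v ∈ V1, (G.neighborSet v).ncard = r)
    (hdeg2 : ∀ v ∈ V2, (G.neighborSet v).ncard = s)
    (hconn : G.Connected) (hdiam : G.diam = 3) :
    V1.card + V2.card ≠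
        ((1 + s * (r - 1)) / (r / Nat.gcd r s)) * (r / Nat.gcd r s + s / Nat.gcd r s) ∧
      V2.card ≤ 1 + s * (r - 1) - r / Nat.gcd r s := by
  classical
  set g := Nat.gcd r s with hg_def
  set ρ := r / g with hρ_def
  set σ := s / g with hσ_def
  set M := 1 + s * (r - 1) with hM_def
  have hr0 : 0 < r := by omega
  have hs0 : 0 < s := by omega
  -- degrees as Finset cards
  have hdA : ∀ v ∈ V1, (G.neighborFinset v).card = r := by
    intro v hv
    rw [← hdeg1 v hv, SimpleGraph.neighborFinset_def, ← Set.ncard_eq_toFinset_card']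
  have hdB : ∀ v ∈ V2, (G.neighborFinset v).card = s := by
    intro v hv
    rw [← hdeg2 v hv, SimpleGraph.neighborFinset_def, ← Set.ncard_eq_toFinset_card']
  have hdisj1 : ∀ v, v ∈ V1 → v ∉ V2 := by
    intro v hv
    rcases hpart v with ⟨_, h2⟩ | ⟨_, h2⟩
    · exact h2
    · exact absurd hv h2
  have hdisj2 : ∀ v, v ∈ V2 → v ∉ V1 := by
    intro v hv
    rcases hpart v with ⟨h1, h2⟩ | ⟨_, h2⟩
    · exact absurd hv h2
    · exact h2
  have hbip' : ∀ u v, G.Adj u v → (u ∈ V2 ∧ v ∈ V1) ∨ (u ∈ V1 ∧ v ∈ V2) :=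
    fun u v h => (hbip u v h).symm
  -- edge count
  have hE : V1.card * r = V2.card * s :=
    edge_count G V1 V2 r s hbip hdisj1 hdA hdB
  -- every two distinct vertices of V2 have a common neighbour
  have hc2 : ∀ v ∈ V2, ∀ u ∈ V2.erase v,
      1 ≤ (G.neighborFinset v ∩ G.neighborFinset u).card := by
    intro v hv u hu
    rw [Finset.mem_erase] at hu
    obtain ⟨w, hw1, hw2⟩ := common_nb G V1 V2 hpart hbip hconn hdiam
      (fun h => hu.1 h.symm) (iff_of_true hv hu.2)
    refine Finset.card_pos.2 ⟨w, ?_⟩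
    simp [Finset.mem_inter, SimpleGraph.mem_neighborFinset, hw1, hw2]
  -- the Moore bound |V2| ≤ M
  have hub : V2.card ≤ M := by
    rcases V2.eq_empty_or_nonempty with h | ⟨v, hv⟩
    · simp [h, hM_def]
    · have hsum := sum_common_nb G V1 V2 r s hbip hdisj1 hdA hdB hv
      have hle : (V2.erase v).card * 1 ≤
          ∑ u ∈ V2.erase v, (G.neighborFinset v ∩ G.neighborFinset u).card := by
        rw [← smul_eq_mul]
        exact Finset.card_nsmul_le_sum _ _ _ (hc2 v hv)
      have hce : (V2.erase v).card = V2.card - 1 := Finset.card_erase_of_mem hv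
      have hv1 : 1 ≤ V2.card := Finset.card_pos.2 ⟨v, hv⟩
      omega
  -- the bound cannot be attained
  have hne2 : V2.card ≠ M := by
    intro hcard
    -- each pair of distinct V2 vertices has exactly one common neighbour
    have hc2eq : ∀ v ∈ V2, ∀ u ∈ V2.erase v,
        (G.neighborFinset v ∩ G.neighborFinset u).card = 1 := by
      intro v hv u hu
      by_contra hne1
      have h2le : 2 ≤ (G.neighborFinset v ∩ G.neighborFinset u).card := by
        have := hc2 v hv u hu; omega
      have hsum := sum_common_nb G V1 V2 r s hbip hdisj1 hdA hdB hv
      have hlt : ∑ _u ∈ V2.erase v, 1 <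
          ∑ u ∈ V2.erase v, (G.neighborFinset v ∩ G.neighborFinset u).card :=
        Finset.sum_lt_sum (fun i hi => hc2 v hv i hi) ⟨u, hu, by omega⟩
      rw [Finset.sum_const, smul_eq_mul, mul_one,
        Finset.card_erase_of_mem hv, hsum] at hlt
      omega
    -- pairs of V1 vertices have at most one common neighbour
    have hc1le : ∀ u ∈ V1, ∀ w ∈ V1.erase u,
        (G.neighborFinset u ∩ G.neighborFinset w).card ≤ 1 := by
      intro u hu w hw
      rw [Finset.mem_erase] at hw
      rw [Finset.card_le_one]
      intro a ha b hb
      by_contra hab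
      rw [Finset.mem_inter, SimpleGraph.mem_neighborFinset,
        SimpleGraph.mem_neighborFinset] at ha hb
      have haV2 : a ∈ V2 := by
        rcases hbip u a ha.1 with ⟨_, h2⟩ | ⟨h1, _⟩
        · exact h2
        · exact absurd hu (hdisj2 u h1)
      have hbV2 : b ∈ V2 := by
        rcases hbip u b hb.1 with ⟨_, h2⟩ | ⟨h1, _⟩
        · exact h2
        · exact absurd hu (hdisj2 u h1)
      have h1 := hc2eq a haV2 b (Finset.mem_erase.2 ⟨fun h => hab h.symm, hbV2⟩)
      have h2 : 1 < (G.neighborFinset a ∩ G.neighborFinset b).card := by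
        refine Finset.one_lt_card.2 ⟨u, ?_, w, ?_, hw.1.symm⟩ <;>
          simp only [Finset.mem_inter, SimpleGraph.mem_neighborFinset]
        · exact ⟨ha.1.symm, hb.1.symm⟩
        · exact ⟨ha.2.symm, hb.2.symm⟩
      omega
    have hc1ge : ∀ u ∈ V1, ∀ w ∈ V1.erase u,
        1 ≤ (G.neighborFinset u ∩ G.neighborFinset w).card := by
      intro u hu w hw
      rw [Finset.mem_erase] at hw
      obtain ⟨a, ha1, ha2⟩ := common_nb G V1 V2 hpart hbip hconn hdiam
        (fun h => hw.1 h.symm) (iff_of_false (hdisj1 u hu) (hdisj1 w hw.2))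
      refine Finset.card_pos.2 ⟨a, ?_⟩
      simp [Finset.mem_inter, SimpleGraph.mem_neighborFinset, ha1, ha2]
    -- pick a vertex of V1
    have hV2ne : V2.Nonempty := by
      rw [← Finset.card_pos, hcard]; omega
    obtain ⟨v, hv⟩ := hV2ne
    have hNv : (G.neighborFinset v).Nonempty := by
      rw [← Finset.card_pos, hdB v hv]; omega
    obtain ⟨u, hu'⟩ := hNv
    have huadj : G.Adj v u := (SimpleGraph.mem_neighborFinset _ _ _).1 hu'
    have hu : u ∈ V1 := by
      rcases hbip v u huadj with ⟨h1, _⟩ | ⟨_, h2⟩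
      · exact absurd hv (hdisj1 v h1)
      · exact h2
    -- |V1| = 1 + r*(s-1)
    have hsum1 := sum_common_nb G V2 V1 s r hbip' hdisj2 hdB hdA hu
    have hall1 : ∀ w ∈ V1.erase u,
        (G.neighborFinset u ∩ G.neighborFinset w).card = 1 :=
      fun w hw => le_antisymm (hc1le u hu w hw) (hc1ge u hu w hw)
    rw [Finset.sum_congr rfl hall1, Finset.sum_const, smul_eq_mul, mul_one,
      Finset.card_erase_of_mem hu] at hsum1
    have hu1 : 1 ≤ V1.card := Finset.card_pos.2 ⟨u, hu⟩
    have hV1card : V1.card = 1 + r * (s - 1) := by omega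
    -- arithmetic contradiction
    rw [hV1card, hcard, hM_def] at hE
    obtain ⟨b, rfl⟩ : ∃ b, s = b + 2 := ⟨s - 2, by omega⟩
    obtain ⟨c, rfl⟩ : ∃ c, r = b + 2 + (c + 1) := ⟨r - b - 3, by omega⟩
    simp only [show b + 2 - 1 = b + 1 from rfl,
      show b + 2 + (c + 1) - 1 = b + 2 + c from by omega] at hE
    have keyZ : ((1:ℤ) + (b + 2 + (c + 1)) * (b + 1)) * (b + 2 + (c + 1))
        = (1 + (b + 2) * (b + 2 + c)) * (b + 2) := by exact_mod_cast hE
    have hzero : ((b:ℤ) + 2 + c) * ((b : ℤ) + 1) * (c + 1) = 0 := by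
      linear_combination keyZ
    have hpos : (0:ℤ) < ((b:ℤ) + 2 + c) * ((b : ℤ) + 1) * (c + 1) := by positivity
    omega
  have hlt : V2.card < M := lt_of_le_of_ne hub hne2
  -- divisibility facts
  have hgr : g ∣ r := Nat.gcd_dvd_left r s
  have hgs : g ∣ s := Nat.gcd_dvd_right r s
  have hg0 : 0 < g := Nat.gcd_pos_of_pos_left s hr0
  have hρ0 : 0 < ρ := Nat.div_pos (Nat.le_of_dvd hr0 hgr) hg0
  have hρr : ρ * g = r := Nat.div_mul_cancel hgr
  have hσs : σ * g = s := Nat.div_mul_cancel hgs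
  have hcop : Nat.Coprime ρ σ := Nat.coprime_div_gcd_div_gcd hg0
  have hE' : V1.card * ρ = V2.card * σ := by
    have h1 : V1.card * ρ * g = V2.card * σ * g := by
      rw [mul_assoc, mul_assoc, hρr, hσs]; exact hE
    exact Nat.eq_of_mul_eq_mul_right hg0 h1
  have hρV2 : ρ ∣ V2.card := by
    refine hcop.dvd_of_dvd_mul_right ?_
    rw [← hE']
    exact Dvd.intro_left _ rfl
  have hρM : ρ ∣ M := by
    have hρr' : ρ ∣ r := Nat.div_dvd_of_dvd hgr
    have e : s * (r - 1) + s = s * r := by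
      have h1 : r - 1 + 1 = r := by omega
      calc s * (r - 1) + s = s * ((r - 1) + 1) := by ring
        _ = s * r := by rw [h1]
    have hsr : M + (s - 1) = s * r := by
      rw [hM_def, ← e]; omega
    have hM' : M = s * r - (s - 1) := by omega
    rw [hM']
    exact Nat.dvd_sub (hρr'.mul_left s) hdvd
  obtain ⟨k, hk⟩ := hρV2
  obtain ⟨m, hm⟩ := hρM
  have hkm : k < m := by
    rw [hk, hm] at hlt
    exact Nat.lt_of_mul_lt_mul_left hlt
  constructor
  · -- Moore bound not attained
    intro heq
    have hMρ : M / ρ = m := by rw [hm, Nat.mul_div_cancel_left _ hρ0]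
    have hV1k : V1.card = k * σ := by
      have h1 : V1.card * ρ = k * σ * ρ := by
        rw [hE', hk]; ring
      exact Nat.eq_of_mul_eq_mul_right hρ0 h1
    rw [hMρ, hV1k, hk] at heq
    have heq' : k * (ρ + σ) = m * (ρ + σ) := by rw [← heq]; ring
    have hkm' : k = m := Nat.eq_of_mul_eq_mul_right (Nat.lt_of_lt_of_le hρ0 (Nat.le_add_right ρ σ)) heq'
    exact (Nat.ne_of_lt hlt) (by rw [hk, hm, hkm'])
  · -- |V2| ≤ M - ρ
    have h1 : k + 1 ≤ m := hkm
    have h2 : ρ * (k + 1) ≤ ρ * m := Nat.mul_le_mul_left ρ h1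
    rw [hk, hm]
    have : ρ * k + ρ ≤ ρ * m := by rw [← Nat.mul_succ]; exact h2
    omega
end

section
/- For odd s ≥ 3, there is no bipartite biregular Moore graph of degrees (2s, s) and diameter 3; that is, no bipartite graph with parts of degrees 2s and s and diameter 3 attains the bound M(2s,s;3). -/
open Finset

private lemma count_swap' {α β : Type*} (A : Finset α) (B : Finset β) (R : α → β → Prop)
    [∀ a b, Decidable (R a b)] :
    ∑ a ∈ A, (B.filter (R a)).card = ∑ b ∈ B, (A.filter (fun a => R a b)).card := by
  simp_rw [Finset.card_filter]
  exact Finset.sum_comm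

set_option maxHeartbeats 2000000 in
/-- For odd `s ≥ 3` there is no bipartite biregular Moore graph of degrees
`(2s, s)` and diameter `3`: no bipartite graph with parts of degrees `2s` and `s` and
diameter `3` attains the bound `M(2s,s;3) = ⌊(1+s(2s-1))/ρ⌋·(ρ+σ)`. -/
theorem stmt_6 {V : Type*} [Fintype V] (G : SimpleGraph V) (V1 V2 : Finset V)
    (hpart : ∀ v, (v ∈ V1 ∧ v ∉ V2) ∨ (v ∈ V2 ∧ v ∉ V1))
    (hbip : ∀ u v, G.Adj u v → (u ∈ V1 ∧ v ∈ V2) ∨ (u ∈ V2 ∧ v ∈ V1))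
    (s : ℕ) (hs : 3 ≤ s) (hodd : Odd s)
    (hdeg1 : ∀ v ∈ V1, (G.neighborSet v).ncard = 2 * s)
    (hdeg2 : ∀ v ∈ V2, (G.neighborSet v).ncard = s)
    (hconn : G.Connected) (hdiam : G.diam = 3) :
    V1.card + V2.card ≠
      ((1 + s * (2 * s - 1)) / (2 * s / Nat.gcd (2 * s) s)) *
        (2 * s / Nat.gcd (2 * s) s + s / Nat.gcd (2 * s) s) := by
  classical
  intro hM
  have hs0 : 0 < s := by omega
  have hss : s ≤ s * s := Nat.le_mul_of_pos_left s hs0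
  have hmul : s * (2 * s - 1) = 2 * (s * s) - s := by
    zify [show (1:ℕ) ≤ 2 * s by omega, show s ≤ 2 * (s * s) by nlinarith]
    ring
  -- simplify the Moore bound value
  have hgcd : Nat.gcd (2 * s) s = s := Nat.gcd_eq_right ⟨2, by ring⟩
  have hrho : 2 * s / Nat.gcd (2 * s) s = 2 := by
    rw [hgcd, Nat.mul_div_cancel _ hs0]
  have hsig : s / Nat.gcd (2 * s) s = 1 := by
    rw [hgcd, Nat.div_self hs0]
  have heven : 2 ∣ 1 + s * (2 * s - 1) := by
    obtain ⟨t, ht⟩ := hodd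
    refine ⟨4 * (t * t) + 3 * t + 1, ?_⟩
    rw [hmul, ht]
    have h1 : (2 * t + 1) * (2 * t + 1) = 4 * (t * t) + 4 * t + 1 := by ring
    omega
  obtain ⟨k, hk⟩ := heven
  have hMval : V1.card + V2.card = 3 * k := by
    rw [hM, hrho, hsig, hk, Nat.mul_div_cancel_left _ (by norm_num : 0 < 2)]
    ring
  have h2k : 2 * k = 2 * (s * s) - s + 1 := by omega
  have hk1 : 1 ≤ k := by omega
  -- neighborhood finsets
  set N : V → Finset V := fun v => Finset.univ.filter (G.Adj v) with hNdef
  have hNmem : ∀ x y : V, x ∈ N y ↔ G.Adj y x := by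
    intro x y; simp [hNdef]
  have hNcard : ∀ v : V, (N v).card = (G.neighborSet v).ncard := by
    intro v
    rw [Set.ncard_eq_toFinset_card']
    congr 1
    ext x
    simp [hNdef]
  have hN1 : ∀ v ∈ V1, ∀ x ∈ N v, x ∈ V2 := by
    intro v hv x hx
    rcases hbip v x ((hNmem x v).1 hx) with ⟨_, h⟩ | ⟨h, _⟩
    · exact h
    · rcases hpart v with ⟨_, h2⟩ | ⟨_, h1⟩
      · exact absurd h h2
      · exact absurd hv h1
  have hN2 : ∀ u ∈ V2, ∀ x ∈ N u, x ∈ V1 := by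
    intro u hu x hx
    rcases hbip u x ((hNmem x u).1 hx) with ⟨h, _⟩ | ⟨_, h⟩
    · rcases hpart u with ⟨_, h2⟩ | ⟨_, h1⟩
      · exact absurd hu h2
      · exact absurd h h1
    · exact h
  have hc1 : ∀ v ∈ V1, (N v).card = 2 * s := fun v hv => (hNcard v).trans (hdeg1 v hv)
  have hc2 : ∀ u ∈ V2, (N u).card = s := fun u hu => (hNcard u).trans (hdeg2 u hu)
  -- edge counting : |V2| = 2 |V1|
  have hedge : V1.card * (2 * s) = V2.card * s := by
    have h1 : ∀ v ∈ V1, (V2.filter (fun u => G.Adj v u)).card = 2 * s := by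
      intro v hv
      rw [show V2.filter (fun u => G.Adj v u) = N v from ?_, hc1 v hv]
      ext x
      simp only [mem_filter, hNmem]
      exact ⟨fun h => h.2, fun h => ⟨hN1 v hv x ((hNmem x v).2 h), h⟩⟩
    have h2 : ∀ u ∈ V2, (V1.filter (fun v => G.Adj v u)).card = s := by
      intro u hu
      rw [show V1.filter (fun v => G.Adj v u) = N u from ?_, hc2 u hu]
      ext x
      simp only [mem_filter, hNmem]
      constructor
      · intro h; exact h.2.symm
      · intro h; exact ⟨hN2 u hu x ((hNmem x u).2 h), h.symm⟩
    have hc := count_swap' V1 V2 (fun v u => G.Adj v u)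
    rw [Finset.sum_congr rfl h1, Finset.sum_congr rfl h2, Finset.sum_const,
      Finset.sum_const, smul_eq_mul, smul_eq_mul] at hc
    exact hc
  have hV2card : V2.card = 2 * V1.card := by
    have h' : (2 * V1.card) * s = V2.card * s := by rw [← hedge]; ring
    exact (Nat.eq_of_mul_eq_mul_right hs0 h').symm
  have hn1 : V1.card = k := by omega
  have hn2 : V2.card = 2 * k := by omega
  -- sides of an edge differ
  have hside : ∀ a c : V, G.Adj a c → (a ∈ V1 ↔ c ∉ V1) := by
    intro a c h
    rcases hbip a c h with ⟨h1, h2⟩ | ⟨h1, h2⟩ <;>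
      rcases hpart a with ⟨ha1, ha2⟩ | ⟨ha1, ha2⟩ <;>
      rcases hpart c with ⟨hc1, hc2⟩ | ⟨hc1, hc2⟩ <;> tauto
  -- parity of walks
  have hpar : ∀ (a b : V) (p : G.Walk a b), Even p.length ↔ (a ∈ V1 ↔ b ∈ V1) := by
    intro a b p
    induction p with
    | nil => simp
    | @cons a c b h p ih =>
      have hac := hside a c h
      rw [SimpleGraph.Walk.length_cons, Nat.even_add_one, ih]
      tauto
  -- distance-2 common neighbors for same-side vertices
  have hdist2 : ∀ a b : V, a ≠ b → ((a ∈ V1) ↔ (b ∈ V1)) → ∃ x, G.Adj a x ∧ G.Adj x b := by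
    intro a b hne hsame
    have hdpos : 0 < G.dist a b := hconn.pos_dist_of_ne hne
    have hdle : G.dist a b ≤ 3 := by
      rw [← hdiam]
      exact SimpleGraph.dist_le_diam
        (SimpleGraph.ediam_ne_top_of_diam_ne_zero (by rw [hdiam]; norm_num))
    obtain ⟨p, hp⟩ := hconn.exists_walk_length_eq_dist a b
    have hev : Even p.length := (hpar a b p).2 hsame
    have hlen2 : p.length = 2 := by
      obtain ⟨m, hm⟩ := hev; omega
    refine ⟨p.getVert 1, ?_, ?_⟩
    · have := p.adj_getVert_succ (i := 0) (by omega)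
      simpa using this
    · have := p.adj_getVert_succ (i := 1) (by omega)
      rw [show (1:ℕ)+1 = p.length by omega, p.getVert_length] at this
      exact this
  have hnotV1 : ∀ u ∈ V2, u ∉ V1 := by
    intro u hu
    rcases hpart u with ⟨_, h2⟩ | ⟨_, h1⟩
    · exact absurd hu h2
    · exact h1
  have hlow2 : ∀ u ∈ V2, ∀ w ∈ V2, u ≠ w → 1 ≤ (N u ∩ N w).card := by
    intro u hu w hw hne
    obtain ⟨x, hx1, hx2⟩ := hdist2 u w hne
      (by constructor <;> (intro h; exact absurd h (hnotV1 _ (by assumption))))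
    refine Finset.card_pos.2 ⟨x, ?_⟩
    rw [Finset.mem_inter, hNmem, hNmem]
    exact ⟨hx1, hx2.symm⟩
  -- key: any two distinct vertices of V2 have exactly one common neighbor
  have key2 : ∀ u ∈ V2, ∀ w ∈ V2, u ≠ w → (N u ∩ N w).card = 1 := by
    intro u hu w hw hne
    set S := V2.erase u with hS
    have hScard : S.card = s * (2 * s - 1) := by
      rw [hS, Finset.card_erase_of_mem hu, hn2, hmul]
      omega
    have hsum : ∑ w' ∈ S, (N u ∩ N w').card = s * (2 * s - 1) := by
      have hinter : ∀ w' : V, N u ∩ N w' = (N u).filter (fun x => w' ∈ N x) := by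
        intro w'
        ext x
        simp only [Finset.mem_inter, Finset.mem_filter, hNmem]
        constructor
        · rintro ⟨h1, h2⟩; exact ⟨h1, h2.symm⟩
        · rintro ⟨h1, h2⟩; exact ⟨h1, h2.symm⟩
      calc ∑ w' ∈ S, (N u ∩ N w').card
          = ∑ w' ∈ S, ((N u).filter (fun x => w' ∈ N x)).card :=
            Finset.sum_congr rfl (fun w' _ => by rw [hinter])
        _ = ∑ x ∈ N u, (S.filter (fun w' => w' ∈ N x)).card :=
            count_swap' S (N u) (fun w' x => w' ∈ N x)
        _ = ∑ x ∈ N u, (2 * s - 1) := by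
            refine Finset.sum_congr rfl (fun x hx => ?_)
            have hxV1 : x ∈ V1 := hN2 u hu x hx
            have hfx : S.filter (fun w' => w' ∈ N x) = (N x).erase u := by
              ext y
              simp only [hS, Finset.mem_filter, Finset.mem_erase]
              constructor
              · rintro ⟨⟨hy1, hy2⟩, hy3⟩; exact ⟨hy1, hy3⟩
              · rintro ⟨hy1, hy2⟩
                exact ⟨⟨hy1, hN1 x hxV1 y hy2⟩, hy2⟩
            rw [hfx, Finset.card_erase_of_mem ((hNmem u x).2 ((hNmem x u).1 hx).symm),
              hc1 x hxV1]
        _ = s * (2 * s - 1) := by rw [Finset.sum_const, hc2 u hu, smul_eq_mul]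
    have hall : ∀ w' ∈ S, (N u ∩ N w').card = 1 := by
      by_contra hcon
      push_neg at hcon
      obtain ⟨w0, hw0, hw0ne⟩ := hcon
      have hw0V2 : w0 ∈ V2 := Finset.mem_of_mem_erase hw0
      have hw0ne' : u ≠ w0 := fun h => (Finset.ne_of_mem_erase hw0) h.symm
      have h1lt : 1 < (N u ∩ N w0).card :=
        lt_of_le_of_ne (hlow2 u hu w0 hw0V2 hw0ne') (fun h => hw0ne h.symm)
      have hlt : ∑ _w' ∈ S, 1 < ∑ w' ∈ S, (N u ∩ N w').card := by
        refine Finset.sum_lt_sum (fun i hi => hlow2 u hu i (Finset.mem_of_mem_erase hi)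
          (fun h => (Finset.ne_of_mem_erase hi) h.symm)) ⟨w0, hw0, h1lt⟩
      rw [Finset.sum_const, smul_eq_mul, mul_one, hsum, hScard] at hlt
      omega
    exact hall w (by rw [hS, Finset.mem_erase]; exact ⟨hne.symm, hw⟩)
  -- any two distinct vertices of V1 have exactly one common neighbor
  have key1 : ∀ v ∈ V1, ∀ w ∈ V1, v ≠ w → (N v ∩ N w).card = 1 := by
    intro v hv w hw hne
    have hlow : 1 ≤ (N v ∩ N w).card := by
      obtain ⟨x, hx1, hx2⟩ := hdist2 v w hne (by tauto)
      refine Finset.card_pos.2 ⟨x, ?_⟩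
      rw [Finset.mem_inter, hNmem, hNmem]
      exact ⟨hx1, hx2.symm⟩
    have hhigh : (N v ∩ N w).card ≤ 1 := by
      by_contra hcon
      push_neg at hcon
      obtain ⟨u, hu, u', hu', huu'⟩ := Finset.one_lt_card.1 hcon
      rw [Finset.mem_inter] at hu hu'
      have huV2 : u ∈ V2 := hN1 v hv u hu.1
      have hu'V2 : u' ∈ V2 := hN1 v hv u' hu'.1
      have hone : (N u ∩ N u').card = 1 := key2 u huV2 u' hu'V2 huu'
      have hvw : v ∈ N u ∩ N u' ∧ w ∈ N u ∩ N u' := by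
        constructor <;> rw [Finset.mem_inter, hNmem, hNmem]
        · exact ⟨((hNmem u v).1 hu.1).symm, ((hNmem u' v).1 hu'.1).symm⟩
        · exact ⟨((hNmem u w).1 hu.2).symm, ((hNmem u' w).1 hu'.2).symm⟩
      have : 1 < (N u ∩ N u').card := Finset.one_lt_card.2 ⟨v, hvw.1, w, hvw.2, hne⟩
      omega
    omega
  -- final double counting
  have hfinal : V1.card * V1.card - V1.card = V2.card * (s * s - s) := by
    have hlhs : ∑ p ∈ V1.offDiag, (N p.1 ∩ N p.2).card = V1.offDiag.card := by
      rw [Finset.card_eq_sum_ones]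
      refine Finset.sum_congr rfl (fun p hp => ?_)
      rw [Finset.mem_offDiag] at hp
      exact key1 p.1 hp.1 p.2 hp.2.1 hp.2.2
    have hinter : ∀ p ∈ V1.offDiag, N p.1 ∩ N p.2 =
        V2.filter (fun u => p.1 ∈ N u ∧ p.2 ∈ N u) := by
      intro p hp
      rw [Finset.mem_offDiag] at hp
      ext x
      simp only [Finset.mem_inter, Finset.mem_filter, hNmem]
      constructor
      · rintro ⟨h1, h2⟩
        exact ⟨hN1 p.1 hp.1 x ((hNmem x p.1).2 h1), h1.symm, h2.symm⟩
      · rintro ⟨_, h1, h2⟩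
        exact ⟨h1.symm, h2.symm⟩
    have hfib : ∀ u ∈ V2, V1.offDiag.filter (fun p => p.1 ∈ N u ∧ p.2 ∈ N u)
        = (N u).offDiag := by
      intro u hu
      ext p
      simp only [Finset.mem_filter, Finset.mem_offDiag]
      constructor
      · rintro ⟨⟨_, _, hne⟩, h1, h2⟩; exact ⟨h1, h2, hne⟩
      · rintro ⟨h1, h2, hne⟩
        exact ⟨⟨hN2 u hu p.1 h1, hN2 u hu p.2 h2, hne⟩, h1, h2⟩
    have hchain : V1.offDiag.card = V2.card * (s * s - s) := by
      calc V1.offDiag.card = ∑ p ∈ V1.offDiag, (N p.1 ∩ N p.2).card := hlhs.symm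
        _ = ∑ p ∈ V1.offDiag, (V2.filter (fun u => p.1 ∈ N u ∧ p.2 ∈ N u)).card :=
            Finset.sum_congr rfl (fun p hp => by rw [hinter p hp])
        _ = ∑ u ∈ V2, (V1.offDiag.filter (fun p => p.1 ∈ N u ∧ p.2 ∈ N u)).card :=
            count_swap' V1.offDiag V2 (fun p u => p.1 ∈ N u ∧ p.2 ∈ N u)
        _ = ∑ u ∈ V2, (s * s - s) := Finset.sum_congr rfl (fun u hu => by
            rw [hfib u hu, Finset.offDiag_card, hc2 u hu])
        _ = V2.card * (s * s - s) := by rw [Finset.sum_const, smul_eq_mul]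
    rw [← Finset.offDiag_card, hchain]
  -- contradiction
  rw [hn1, hn2] at hfinal
  have hkk : k ≤ k * k := Nat.le_mul_of_pos_left k hk1
  have hfZ : (k:ℤ) * k - k = 2 * (k:ℤ) * ((s:ℤ) * s - s) := by
    have hcast := congrArg (Nat.cast (R := ℤ)) hfinal
    push_cast [hkk, hss] at hcast
    linarith
  have hZ : (k:ℤ) * ((k:ℤ) - 1) = (k:ℤ) * (2 * ((s:ℤ) * s - s)) := by ring_nf; linarith [hfZ]
  have hcancel : (k:ℤ) - 1 = 2 * ((s:ℤ) * s - s) :=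
    mul_left_cancel₀ (show (k:ℤ) ≠ 0 by exact_mod_cast (by omega : k ≠ 0)) hZ
  have h2kZ : 2 * (k:ℤ) = 2 * ((s:ℤ) * s) - s + 1 := by
    have hle : s ≤ 2 * (s * s) := by nlinarith
    have hcast := congrArg (Nat.cast (R := ℤ)) h2k
    push_cast [hle] at hcast
    linarith
  have hA : 3 * (s:ℤ) ≤ (s:ℤ) * s := by nlinarith [show (3:ℤ) ≤ (s:ℤ) by exact_mod_cast hs]
  linarith
end

section
/- Let G = (V1 ∪ V2, E) be a bipartite graph with |V1| = n1, |V2| = n2 and adjacency matrix in block form [[0, N],[Nᵀ, 0]]. If v = (v1 | v2)ᵀ is an eigenvector of the adjacency matrix of G with eigenvalue λ, then (v1 | v1 | √2·v2)ᵀ is an eigenvector of the adjacency matrix of the semi-double graph G^{2V1} with eigenvalue √2·λ. -/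
open Matrix
/-- If `v = (v1 | v2)ᵀ` is a `λ`-eigenvector of the adjacency matrix
`[[0, N],[Nᵀ, 0]]` of a bipartite graph `G`, then `(v1 | v1 | √2·v2)ᵀ` is a
`√2·λ`-eigenvector of the adjacency matrix `[[0,0,N],[0,0,N],[Nᵀ,Nᵀ,0]]` of the
semi-double graph `G^{2V1}`. -/
theorem stmt_11 {n1 n2 : ℕ} (N : Matrix (Fin n1) (Fin n2) ℝ)
    (v1 : Fin n1 → ℝ) (v2 : Fin n2 → ℝ) (lam : ℝ)
    (heig : (Matrix.fromBlocks 0 N Nᵀ 0).mulVec (Sum.elim v1 v2) =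
      lam • Sum.elim v1 v2) :
    (Matrix.fromBlocks 0 (Matrix.of fun (i : Fin n1 ⊕ Fin n1) j => N (i.elim id id) j)
        (Matrix.of fun (i : Fin n1 ⊕ Fin n1) j => N (i.elim id id) j)ᵀ 0).mulVec
        (Sum.elim (Sum.elim v1 v1) ((Real.sqrt 2) • v2)) =
      (Real.sqrt 2 * lam) • Sum.elim (Sum.elim v1 v1) ((Real.sqrt 2) • v2) := by
  rw [fromBlocks_mulVec] at heig ⊢
  have h1 : N.mulVec v2 = lam • v1 := by
    funext i; have := congrFun heig (Sum.inl i); simpa using this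
  have h2 : Nᵀ.mulVec v1 = lam • v2 := by
    funext j; have := congrFun heig (Sum.inr j); simpa using this
  have hs : Real.sqrt 2 * Real.sqrt 2 = 2 := Real.mul_self_sqrt (by norm_num)
  funext x
  rcases x with (i | i) | j
  · have e : ∑ x, N i x * (Real.sqrt 2 * v2 x) = Real.sqrt 2 * ∑ x, N i x * v2 x := by
      rw [Finset.mul_sum]; exact Finset.sum_congr rfl fun x _ => by ring
    have h := congrFun h1 i
    simp only [mulVec, dotProduct, Pi.smul_apply, smul_eq_mul] at h
    simp [mulVec, dotProduct, e, h]
    ring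
  · have e : ∑ x, N i x * (Real.sqrt 2 * v2 x) = Real.sqrt 2 * ∑ x, N i x * v2 x := by
      rw [Finset.mul_sum]; exact Finset.sum_congr rfl fun x _ => by ring
    have h := congrFun h1 i
    simp only [mulVec, dotProduct, Pi.smul_apply, smul_eq_mul] at h
    simp [mulVec, dotProduct, e, h]
    ring
  · have h := congrFun h2 j
    simp only [mulVec, dotProduct, Pi.smul_apply, smul_eq_mul, transpose_apply] at h
    simp [mulVec, dotProduct, Fintype.sum_sum_type, h]
    linear_combination (-(lam * v2 j)) * hs
end

section
/- Let G = (V1 ∪ V2, E) be a bipartite graph with |V1| = n1 and |V2| = n2. The multiset of eigenvalues of the semi-double graph G^{2V1} is exactly {√2·λ : λ eigenvalue of G (with multiplicity)} together with the eigenvalue 0 with additional multiplicity n1. -/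
/-! The involution that replaces every pair of twins `u, u'` by `(u + u') / √2` and
`(u - u') / √2` conjugates the adjacency matrix of `G^{2V1}` into the block sum of `√2 • A(G)`
and the zero matrix on `V1`. As `A(G)` is symmetric, the characteristic roots of `√2 • A(G)` are
`√2` times those of `A(G)`. -/

open Matrix Polynomial

namespace Matrix

variable {m n p R : Type*} [Fintype m] [Fintype n] [Fintype p]
  [DecidableEq m] [DecidableEq n] [DecidableEq p]

lemma charpoly_conj_of_mul_self_eq_one [CommRing R] {P : Matrix n n R} (hP : P * P = 1)
    (A : Matrix n n R) : (P * A * P).charpoly = A.charpoly := by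
  rw [mul_assoc, charpoly_mul_comm, mul_assoc, hP, mul_one]

lemma charpoly_fromBlocks_zero_fromRows_zero [CommRing R] (K : Matrix m n R)
    (L : Matrix n m R) :
    (fromBlocks 0 (fromRows K (0 : Matrix p n R)) (fromCols L (0 : Matrix n p R)) 0).charpoly =
      (fromBlocks 0 K L 0).charpoly * X ^ Fintype.card p := by
  let e : (m ⊕ p) ⊕ n ≃ (m ⊕ n) ⊕ p :=
    (Equiv.sumAssoc _ _ _).trans <| (Equiv.sumCongr (Equiv.refl _) (Equiv.sumComm _ _)).trans
      (Equiv.sumAssoc _ _ _).symm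
  have : reindex e e (fromBlocks 0 (fromRows K (0 : Matrix p n R)) (fromCols L 0) 0) =
      fromBlocks (fromBlocks 0 K L 0) 0 0 0 := by
    ext ((i | i) | i) ((j | j) | j) <;> rfl
  rw [← charpoly_reindex e, this, charpoly_fromBlocks_zero₁₂, charpoly_zero]

lemma IsHermitian.roots_charpoly_smul {𝕜 : Type*} [RCLike 𝕜] {A : Matrix n n 𝕜}
    (hA : A.IsHermitian) (c : ℝ) :
    (c • A).charpoly.roots = A.charpoly.roots.map ((c : 𝕜) * ·) := by
  rw [← cfc_const_mul_id c A (show IsSelfAdjoint A from hA), hA.charpoly_cfc_eq,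
    roots_prod _ _ (Finset.prod_ne_zero_iff.mpr fun _ _ => X_sub_C_ne_zero _),
    hA.roots_charpoly_eq_eigenvalues, Multiset.map_map]
  simp only [roots_X_sub_C, Multiset.bind_singleton, Function.comp_apply, RCLike.ofReal_mul]

lemma charpoly_fromBlocks_fromRows_self {K : Type*} [Field K] {c : K} (hc : c * c = 2)
    (hc0 : c ≠ 0) (N : Matrix m n K) :
    (fromBlocks 0 (fromRows N N) (fromRows N N)ᵀ 0).charpoly =
      (c • fromBlocks 0 N Nᵀ 0).charpoly * X ^ Fintype.card m := by
  set H : Matrix (m ⊕ m) (m ⊕ m) K := c⁻¹ • fromBlocks 1 1 1 (-1) with hHdef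
  have hHt : Hᵀ = H := by simp [H, fromBlocks_transpose]
  have hH : H * H = 1 := by
    have hc2 : c⁻¹ * c⁻¹ * 2 = 1 := by rw [← hc]; field_simp
    rw [hHdef, smul_mul_smul_comm, fromBlocks_multiply, ← fromBlocks_one]
    simp only [mul_one, mul_neg, neg_neg, add_neg_cancel, ← two_smul K (1 : Matrix m m K),
      fromBlocks_smul, smul_zero, smul_smul, hc2, one_smul]
  have hHN : H * fromRows N N = fromRows (c • N) 0 := by
    have hc2 : c⁻¹ * 2 = c := by rw [← hc]; field_simp
    rw [hHdef, Matrix.smul_mul, fromBlocks_mul_fromRows]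
    rw [Matrix.one_mul, Matrix.neg_mul, Matrix.one_mul, add_neg_cancel, ← two_smul K N]
    ext (i | i) j <;> simp [← mul_assoc, hc2]
  have hNH : (fromRows N N)ᵀ * H = fromCols (c • Nᵀ) 0 := by
    rw [← hHt, ← transpose_mul, hHN, transpose_fromRows, transpose_smul, transpose_zero]
  set P : Matrix ((m ⊕ m) ⊕ n) ((m ⊕ m) ⊕ n) K := fromBlocks H 0 0 1
  have hP : P * P = 1 := by simp [P, fromBlocks_multiply, hH, fromBlocks_one]
  have hPAP : P * fromBlocks 0 (fromRows N N) (fromRows N N)ᵀ 0 * P =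
      fromBlocks 0 (fromRows (c • N) 0) (fromCols (c • Nᵀ) 0) 0 := by
    simp only [P, fromBlocks_multiply, Matrix.zero_mul, Matrix.mul_zero, Matrix.one_mul,
      Matrix.mul_one, add_zero, zero_add, hHN, hNH]
  rw [← charpoly_conj_of_mul_self_eq_one hP, hPAP, charpoly_fromBlocks_zero_fromRows_zero,
    fromBlocks_smul, smul_zero, smul_zero]

end Matrix

/-- The multiset of eigenvalues of the semi-double graph `G^{2V1}`
(whose adjacency matrix is `[[0,0,N],[0,0,N],[Nᵀ,Nᵀ,0]]`) is exactly
`{√2·λ : λ eigenvalue of G}` (with multiplicity) together with `0` with additional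
multiplicity `n1`, where the adjacency matrix of `G` is `[[0,N],[Nᵀ,0]]`. -/
theorem stmt_12 {n1 n2 : ℕ} (N : Matrix (Fin n1) (Fin n2) ℝ) :
    (Matrix.charpoly (Matrix.fromBlocks 0
        (Matrix.of fun (i : Fin n1 ⊕ Fin n1) j => N (i.elim id id) j)
        (Matrix.of fun (i : Fin n1 ⊕ Fin n1) j => N (i.elim id id) j)ᵀ 0)).roots =
      Multiset.replicate n1 0 +
        (Matrix.charpoly (Matrix.fromBlocks 0 N Nᵀ 0)).roots.map
          (fun lam => Real.sqrt 2 * lam) := by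
  have hrows : (Matrix.of fun (i : Fin n1 ⊕ Fin n1) j => N (i.elim id id) j) = fromRows N N := by
    ext (i | i) j <;> rfl
  have hsqrt : Real.sqrt 2 * Real.sqrt 2 = 2 := Real.mul_self_sqrt zero_le_two
  have hG : (fromBlocks 0 N Nᵀ 0).IsHermitian :=
    isHermitian_zero.fromBlocks (conjTranspose_eq_transpose_of_trivial N) isHermitian_zero
  rw [hrows, charpoly_fromBlocks_fromRows_self hsqrt (by positivity),
    roots_mul ((charpoly_monic _).mul ((monic_X).pow _)).ne_zero, roots_X_pow,
    hG.roots_charpoly_smul, add_comm, Fintype.card_fin, Multiset.nsmul_singleton]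
  rfl
end

section
/- Let G = (V1 ∪ V2, E) be a bipartite graph on n1 + n2 vertices and k ≥ 1. The k-tuple graph G^{kV1}, obtained by replacing each vertex of V1 with k copies having the same neighborhood, has spectrum {√k·λ : λ eigenvalue of G} ∪ {0 with multiplicity (k−1)·n1}; moreover, if G is connected with diameter D ≥ 2, then G^{kV1} has diameter D. -/
/-!
With `N` the biadjacency matrix, the adjacency matrix of a bipartite graph is
`[[0, N], [Nᵀ, 0]]`, and for `x ≠ 0` the Schur complement gives
`χ(x) = x ^ (n₁ + n₂) * det (1 - x⁻² • NᵀN)`.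
Replacing each vertex of `V₁` by `k` twins replaces `NᵀN` by `k • NᵀN`, whence
`X ^ n₁ * χ_{G^{kV₁}} = X ^ (k n₁) * √k ^ (n₁ + n₂) * χ_G (X / √k)`:
the roots are `(k - 1) n₁` extra zeros and the `√k * λ`.

`G^{kV₁}` is the pullback of `G` along the surjection forgetting the copy index. Walks lift along
it, so vertices with distinct images keep their distance, while two copies of the same vertex are
at distance at most `2 ≤ D` through any lift of a neighbour.
-/

open Matrix

/-- The bipartite graph on parts `A` and `B` determined by the relation `R`. -/
def bipGraph {A B : Type*} (R : A → B → Prop) : SimpleGraph (A ⊕ B) where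
  Adj x y :=
    match x, y with
    | Sum.inl a, Sum.inr b => R a b
    | Sum.inr b, Sum.inl a => R a b
    | _, _ => False
  symm := by constructor; rintro (a | b) (a' | b') h <;> simp_all
  loopless := by constructor; rintro (a | b) h <;> simp_all

/-- The `k`-tuple graph `G^{kV1}` of the bipartite graph determined by `R`:
every vertex of the part `A` is replaced by `k` copies with the same neighborhood. -/
def bipTupleGraph {A B : Type*} (R : A → B → Prop) (k : ℕ) :
    SimpleGraph ((A × Fin k) ⊕ B) where
  Adj x y :=
    match x, y with
    | Sum.inl a, Sum.inr b => R a.1 b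
    | Sum.inr b, Sum.inl a => R a.1 b
    | _, _ => False
  symm := by constructor; rintro (a | b) (a' | b') h <;> simp_all
  loopless := by constructor; rintro (a | b) h <;> simp_all

open Polynomial

theorem roots_C_mul_comp_C_inv_mul_X {K : Type*} [Field K] (p : K[X]) {a c : K} (ha : a ≠ 0)
    (hc : c ≠ 0) :
    (C a * p.comp (C c⁻¹ * X)).roots = p.roots.map (c * ·) := by
  have := roots_comp_C_mul_X_add_C p c⁻¹ 0 (isUnit_iff_ne_zero.mpr (inv_ne_zero hc))
  simpa [roots_C_mul _ ha] using this

theorem roots_X_pow_mul {R : Type*} [CommRing R] [IsDomain R] {p : R[X]} (hp : p ≠ 0) (k : ℕ) :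
    (X ^ k * p).roots = Multiset.replicate k 0 + p.roots := by
  rw [roots_mul (mul_ne_zero (pow_ne_zero _ X_ne_zero) hp), roots_X_pow, Multiset.nsmul_singleton]

section Spectrum

variable {K : Type*} [Field K] {m m' n : Type*} [Fintype m] [Fintype m'] [Fintype n]
  [DecidableEq m] [DecidableEq m'] [DecidableEq n]

theorem eval_charpoly_fromBlocks_zero (N : Matrix m n K) {x : K} (hx : x ≠ 0) :
    (fromBlocks 0 N Nᵀ 0).charpoly.eval x
      = x ^ (Fintype.card m + Fintype.card n) * (1 - (x ^ 2)⁻¹ • (Nᵀ * N)).det := by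
  have hfactor : scalar (m ⊕ n) x - fromBlocks 0 N Nᵀ 0
      = x • fromBlocks 1 (-x⁻¹ • N) (-x⁻¹ • Nᵀ) 1 := by
    ext (i | i) (j | j) <;> simp [hx, Matrix.one_apply, diagonal_apply]
  rw [eval_charpoly, hfactor, det_smul, det_fromBlocks_one₁₁, Fintype.card_sum,
    Matrix.smul_mul, Matrix.mul_smul, smul_smul, neg_mul_neg, sq, mul_inv]

theorem charpoly_fromBlocks_zero_of_transpose_mul_eq [Infinite K] (N : Matrix m n K)
    (N' : Matrix m' n K) {c : K} (hc : c ≠ 0) (h : N'ᵀ * N' = c ^ 2 • (Nᵀ * N)) :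
    X ^ Fintype.card m * (fromBlocks 0 N' N'ᵀ 0).charpoly
      = X ^ Fintype.card m' * (C (c ^ (Fintype.card m + Fintype.card n)) *
          (fromBlocks 0 N Nᵀ 0).charpoly.comp (C c⁻¹ * X)) := by
  refine eq_of_infinite_eval_eq _ _ ((Set.finite_singleton 0).infinite_compl.mono fun x hx => ?_)
  have hx : x ≠ 0 := hx
  have hscale : (((c⁻¹ * x) ^ 2)⁻¹ : K) = (x ^ 2)⁻¹ * c ^ 2 := by field_simp
  simp only [Set.mem_ofPred_eq, eval_mul, eval_pow, eval_X, eval_C, eval_comp]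
  rw [eval_charpoly_fromBlocks_zero N' hx,
    eval_charpoly_fromBlocks_zero N (mul_ne_zero (inv_ne_zero hc) hx), h, smul_smul,
    hscale, ← mul_assoc (c ^ _), ← mul_pow, mul_inv_cancel_left₀ hc]
  ring

theorem roots_charpoly_fromBlocks_zero_of_transpose_mul_eq [Infinite K] (N : Matrix m n K)
    (N' : Matrix m' n K) {c : K} (hc : c ≠ 0) (h : N'ᵀ * N' = c ^ 2 • (Nᵀ * N))
    (hcard : Fintype.card m ≤ Fintype.card m') :
    (fromBlocks 0 N' N'ᵀ 0).charpoly.roots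
      = Multiset.replicate (Fintype.card m' - Fintype.card m) 0
          + (fromBlocks 0 N Nᵀ 0).charpoly.roots.map (c * ·) := by
  have hpoly := charpoly_fromBlocks_zero_of_transpose_mul_eq N N' hc h
  have hne : C (c ^ (Fintype.card m + Fintype.card n)) *
      (fromBlocks 0 N Nᵀ 0).charpoly.comp (C c⁻¹ * X) ≠ 0 :=
    right_ne_zero_of_mul <|
      hpoly ▸ mul_ne_zero (pow_ne_zero _ X_ne_zero) (charpoly_monic _).ne_zero
  have hroots := congrArg roots hpoly
  rw [roots_X_pow_mul (charpoly_monic _).ne_zero, roots_X_pow_mul hne,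
    roots_C_mul_comp_C_inv_mul_X _ (pow_ne_zero _ hc) hc, ← Nat.add_sub_cancel' hcard,
    Multiset.replicate_add, add_assoc] at hroots
  exact add_left_cancel hroots

end Spectrum

theorem transpose_mul_submatrix_fst {m n ι α : Type*} [Fintype m] [Fintype ι]
    [NonUnitalNonAssocSemiring α] (N : Matrix m n α) :
    (N.submatrix Prod.fst id : Matrix (m × ι) n α)ᵀ *
        (N.submatrix Prod.fst id : Matrix (m × ι) n α)
      = Fintype.card ι • (Nᵀ * N) := by
  ext i j
  simp [mul_apply, Fintype.sum_prod_type, Finset.smul_sum]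

section Graph

variable {A B : Type*}

open scoped Classical in
noncomputable def biadjMatrix (α : Type*) [Zero α] [One α] (R : A → B → Prop) :
    Matrix A B α :=
  of fun a b => if R a b then 1 else 0

theorem adjMatrix_bipGraph (α : Type*) [Zero α] [One α] (R : A → B → Prop)
    [DecidableRel (bipGraph R).Adj] :
    (bipGraph R).adjMatrix α = fromBlocks 0 (biadjMatrix α R) (biadjMatrix α R)ᵀ 0 := by
  ext (a | b) (a' | b') <;> simp only [SimpleGraph.adjMatrix_apply] <;>
    simp [bipGraph, biadjMatrix] <;> congr

theorem bipTupleGraph_eq_bipGraph (R : A → B → Prop) (k : ℕ) :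
    bipTupleGraph R k = bipGraph (fun (a : A × Fin k) b => R a.1 b) := by
  ext (a | b) (a' | b') <;> rfl

theorem biadjMatrix_comp_fst (α : Type*) [Zero α] [One α] (R : A → B → Prop)
    (ι : Type*) :
    biadjMatrix α (fun (a : A × ι) b => R a.1 b) = (biadjMatrix α R).submatrix Prod.fst id :=
  rfl

theorem bipTupleGraph_eq_comap (R : A → B → Prop) (k : ℕ) :
    bipTupleGraph R k = (bipGraph R).comap (Sum.map Prod.fst id) := by
  ext (a | b) (a' | b') <;> rfl

open scoped Classical in
theorem roots_charpoly_adjMatrix_bipTupleGraph [Fintype A] [Fintype B] (R : A → B → Prop)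
    {k : ℕ} (hk : 1 ≤ k) :
    (Matrix.charpoly ((bipTupleGraph R k).adjMatrix ℝ)).roots =
      Multiset.replicate ((k - 1) * Fintype.card A) 0 +
        (Matrix.charpoly ((bipGraph R).adjMatrix ℝ)).roots.map
          (fun lam => Real.sqrt k * lam) := by
  have hT := transpose_mul_submatrix_fst (ι := Fin k) (biadjMatrix ℝ R)
  rw [Fintype.card_fin, ← Nat.cast_smul_eq_nsmul ℝ, ← Real.sq_sqrt k.cast_nonneg] at hT
  rw [bipTupleGraph_eq_bipGraph, adjMatrix_bipGraph, adjMatrix_bipGraph, biadjMatrix_comp_fst,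
    roots_charpoly_fromBlocks_zero_of_transpose_mul_eq _ _ (by positivity) hT
      (by simpa using Nat.le_mul_of_pos_right _ hk),
    Fintype.card_prod, Fintype.card_fin, ← Nat.mul_sub_one, mul_comm]

end Graph

namespace SimpleGraph

variable {V W : Type*} {G : SimpleGraph V} {H : SimpleGraph W}

theorem Hom.edist_le (f : G →g H) (u v : V) : H.edist (f u) (f v) ≤ G.edist u v := by
  by_cases h : G.Reachable u v
  · obtain ⟨w, hw⟩ := h.exists_walk_length_eq_edist
    rw [← hw, ← w.length_map f]
    exact SimpleGraph.edist_le _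
  · rw [edist_eq_top_of_not_reachable h]
    exact le_top

variable {φ : V → W}

theorem exists_walk_comap_length_eq (hφ : φ.Surjective) {u v : W} (w : H.Walk u v)
    (hw : ¬ w.Nil) {x y : V} (hx : φ x = u) (hy : φ y = v) :
    ∃ w' : (H.comap φ).Walk x y, w'.length = w.length := by
  induction w generalizing x with
  | nil => exact absurd Walk.Nil.nil hw
  | @cons u m v hadj p ih =>
    subst hx
    by_cases hp : p.Nil
    · obtain rfl := hp.eq
      have hxy : (H.comap φ).Adj x y := by simpa [hy] using hadj
      exact ⟨.cons hxy .nil, by simp [hp.length_eq_zero]⟩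
    · obtain ⟨x', rfl⟩ := hφ m
      have hxx' : (H.comap φ).Adj x x' := hadj
      obtain ⟨w', hw'⟩ := ih hp rfl hy
      exact ⟨.cons hxx' w', by simp [hw']⟩

theorem edist_comap_of_ne (hφ : φ.Surjective) {x y : V} (hxy : φ x ≠ φ y) :
    (H.comap φ).edist x y = H.edist (φ x) (φ y) := by
  refine le_antisymm ?_ ((Hom.comap φ H).edist_le x y)
  by_cases h : H.Reachable (φ x) (φ y)
  · obtain ⟨w, hw⟩ := h.exists_walk_length_eq_edist
    obtain ⟨w', hw'⟩ := exists_walk_comap_length_eq hφ w (w.not_nil_of_ne hxy) rfl rfl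
    rw [← hw, ← hw']
    exact edist_le w'
  · rw [edist_eq_top_of_not_reachable h]
    exact le_top

theorem edist_comap_le_two {x y z : V} (hxy : φ x = φ y) (hadj : H.Adj (φ x) (φ z)) :
    (H.comap φ).edist x y ≤ 2 := by
  have hxz : (H.comap φ).Adj x z := hadj
  have hzy : (H.comap φ).Adj z y := by simpa [hxy] using hadj.symm
  exact edist_le (hxz.toWalk.concat hzy)

theorem ediam_comap (hφ : φ.Surjective) (hH : H.Connected) (h2 : 2 ≤ H.ediam) :
    (H.comap φ).ediam = H.ediam := by
  apply le_antisymm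
  · refine ediam_le_of_edist_le fun x y => ?_
    by_cases hxy : φ x = φ y
    · have : Nontrivial W := nontrivial_of_ediam_ne_zero (by positivity)
      obtain ⟨u, hu⟩ := hH.preconnected.exists_adj_of_nontrivial (φ x)
      obtain ⟨z, rfl⟩ := hφ u
      exact (edist_comap_le_two hxy hu).trans h2
    · rw [edist_comap_of_ne hφ hxy]
      exact edist_le_ediam
  · refine ediam_le_of_edist_le fun u v => ?_
    obtain ⟨x, rfl⟩ := hφ u
    obtain ⟨y, rfl⟩ := hφ v
    exact ((Hom.comap φ H).edist_le x y).trans edist_le_ediam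

theorem diam_comap (hφ : φ.Surjective) (hH : H.Connected) (h2 : 2 ≤ H.diam) :
    (H.comap φ).diam = H.diam := by
  have h2' : 2 ≤ H.ediam := (Nat.cast_le.mpr h2).trans (ENat.natCast_toNat_le_self _)
  rw [diam, diam, ediam_comap hφ hH h2']

end SimpleGraph

open scoped Classical in
/-- The `k`-tuple graph `G^{kV1}` of a bipartite graph `G` has spectrum
`{√k·λ : λ eigenvalue of G}` together with `0` with additional multiplicity `(k−1)·n1`;
moreover, if `G` is connected with diameter `D ≥ 2`, then `G^{kV1}` has diameter `D`. -/
theorem stmt_13 {A B : Type*} [Fintype A] [Fintype B] (R : A → B → Prop)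
    (k : ℕ) (hk : 1 ≤ k) :
    ((Matrix.charpoly ((bipTupleGraph R k).adjMatrix ℝ)).roots =
        Multiset.replicate ((k - 1) * Fintype.card A) 0 +
          (Matrix.charpoly ((bipGraph R).adjMatrix ℝ)).roots.map
            (fun lam => Real.sqrt k * lam)) ∧
      ∀ D : ℕ, 2 ≤ D → (bipGraph R).Connected → (bipGraph R).diam = D →
        (bipTupleGraph R k).diam = D := by
  refine ⟨roots_charpoly_adjMatrix_bipTupleGraph R hk, fun D hD hconn hdiam => ?_⟩
  have : Nonempty (Fin k) := ⟨⟨0, hk⟩⟩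
  have hφ : (Sum.map Prod.fst id : (A × Fin k) ⊕ B → A ⊕ B).Surjective :=
    Sum.map_surjective.mpr ⟨Prod.fst_surjective, Function.surjective_id⟩
  rw [bipTupleGraph_eq_comap, SimpleGraph.diam_comap hφ hconn (hdiam ▸ hD), hdiam]
end

section
/- For n ≥ 6, let G_{6+n} be the bipartite graph with parts V1 = Z_6 and V2 = Z_n where i ∈ V2 is adjacent to j ∈ V1 iff j ≡ i, i+1, or i+3 (mod 6). Then G_{6+n} has diameter 3. -/
/-- The graph `G_{6+n}`: parts `V1 = Z_6` and `V2 = {0,…,n−1}`, where `i ∈ V2` is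
adjacent to `j ∈ V1` iff `j ≡ i, i+1, i+3 (mod 6)`. -/
def G6n (n : ℕ) : SimpleGraph (ZMod 6 ⊕ Fin n) :=
  bipGraph (fun (j : ZMod 6) (i : Fin n) =>
    j = ((i : ℕ) : ZMod 6) ∨ j = ((i : ℕ) : ZMod 6) + 1 ∨ j = ((i : ℕ) : ZMod 6) + 3)

namespace SimpleGraph

lemma edist_le_two_of_adj_of_adj {V : Type*} {G : SimpleGraph V} {u v w : V}
    (huw : G.Adj u w) (hwv : G.Adj w v) : G.edist u v ≤ 2 := by
  simpa using (Walk.cons huw hwv.toWalk).edist_le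

end SimpleGraph

open SimpleGraph

section bipGraph

variable {A B : Type*} {R : A → B → Prop}

@[simp]
lemma bipGraph_not_adj_inl_inl {a a' : A} : ¬ (bipGraph R).Adj (.inl a) (.inl a') :=
  id

@[simp]
lemma bipGraph_not_adj_inr_inr {b b' : B} : ¬ (bipGraph R).Adj (.inr b) (.inr b') :=
  id

lemma bipGraph_two_lt_edist_of_not_rel {a : A} {b : B} (h : ¬ R a b) :
    2 < (bipGraph R).edist (.inl a) (.inr b) := by
  rw [two_lt_edist_iff]
  refine ⟨Sum.inl_ne_inr, h, Set.eq_empty_of_forall_notMem ?_⟩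
  rintro (a' | b') <;> simp [mem_commonNeighbors]

lemma bipGraph_ediam_le_three (hA : ∀ a a', ∃ b, R a b ∧ R a' b)
    (hB : ∀ b b', ∃ a, R a b ∧ R a b') : (bipGraph R).ediam ≤ 3 := by
  have hAA (a a' : A) : (bipGraph R).edist (.inl a) (.inl a') ≤ 2 := by
    obtain ⟨b, hab, ha'b⟩ := hA a a'
    exact edist_le_two_of_adj_of_adj (w := .inr b) hab ha'b
  have hBB (b b' : B) : (bipGraph R).edist (.inr b) (.inr b') ≤ 2 := by
    obtain ⟨a, hab, hab'⟩ := hB b b'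
    exact edist_le_two_of_adj_of_adj (w := .inl a) hab hab'
  have hAB (a : A) (b : B) : (bipGraph R).edist (.inl a) (.inr b) ≤ 3 := by
    obtain ⟨a', ha'b, -⟩ := hB b b
    calc (bipGraph R).edist (.inl a) (.inr b)
        ≤ (bipGraph R).edist (.inl a) (.inl a') + (bipGraph R).edist (.inl a') (.inr b) :=
          (bipGraph R).edist_triangle
      _ ≤ 2 + 1 := add_le_add (hAA a a') (edist_eq_one_iff_adj.mpr ha'b).le
      _ = 3 := by norm_num
  rw [ediam_le_iff]
  rintro (a | b) (a' | b')
  · exact (hAA a a').trans (by norm_num)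
  · exact hAB a b'
  · rw [SimpleGraph.edist_comm]
    exact hAB a' b
  · exact (hBB b b').trans (by norm_num)

lemma bipGraph_ediam_eq_three (hA : ∀ a a', ∃ b, R a b ∧ R a' b)
    (hB : ∀ b b', ∃ a, R a b ∧ R a b') {a : A} {b : B} (hab : ¬ R a b) :
    (bipGraph R).ediam = 3 :=
  (bipGraph_ediam_le_three hA hB).antisymm <|
    Order.add_one_le_of_lt ((bipGraph_two_lt_edist_of_not_rel hab).trans_le edist_le_ediam)

end bipGraph

open scoped Pointwise

section DifferenceSet

variable {G : Type*} [AddCommGroup G] {D : Set G}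

lemma exists_sub_mem_sub_mem_of_sub_eq_univ (hD : D - D = Set.univ) (x y : G) :
    ∃ r, x - r ∈ D ∧ y - r ∈ D := by
  obtain ⟨d, hd, e, he, hde⟩ := Set.mem_sub.mp (hD ▸ Set.mem_univ (x - y))
  refine ⟨x - d, by rwa [sub_sub_cancel], ?_⟩
  obtain rfl : e = d - (x - y) := by rw [← hde]; abel
  convert he using 1
  abel

lemma exists_sub_mem_sub_mem_of_sub_eq_univ' (hD : D - D = Set.univ) (x y : G) :
    ∃ r, r - x ∈ D ∧ r - y ∈ D := by
  obtain ⟨d, hd, e, he, hde⟩ := Set.mem_sub.mp (hD ▸ Set.mem_univ (y - x))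
  refine ⟨x + d, by rwa [add_sub_cancel_left], ?_⟩
  obtain rfl : e = d - (y - x) := by rw [← hde]; abel
  convert he using 1
  abel

end DifferenceSet

lemma zero_one_three_sub_self_zmod6 : ({0, 1, 3} : Set (ZMod 6)) - {0, 1, 3} = Set.univ := by
  ext d
  simp only [Set.mem_sub, Set.mem_insert_iff, Set.mem_singleton_iff, Set.mem_univ, iff_true]
  revert d; decide

lemma Fin.exists_natCast_eq {m n : ℕ} [NeZero m] (h : m ≤ n) (r : ZMod m) :
    ∃ i : Fin n, ((i : ℕ) : ZMod m) = r :=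
  ⟨⟨r.val, r.val_lt.trans_le h⟩, ZMod.natCast_zmod_val r⟩

lemma G6n_eq_bipGraph (n : ℕ) :
    G6n n = bipGraph fun j (i : Fin n) ↦ j - ((i : ℕ) : ZMod 6) ∈ ({0, 1, 3} : Set (ZMod 6)) := by
  unfold G6n
  congr! 3 with j i
  simp only [Set.mem_insert_iff, Set.mem_singleton_iff, sub_eq_iff_eq_add', add_zero]

/-- For `n ≥ 6`, the bipartite graph `G_{6+n}` has diameter `3`. -/
theorem stmt_15 (n : ℕ) (hn : 6 ≤ n) : (G6n n).diam = 3 := by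
  rw [diam, G6n_eq_bipGraph, bipGraph_ediam_eq_three (a := 2) (b := ⟨0, by omega⟩)]
  · rfl
  · intro j j'
    obtain ⟨r, hj, hj'⟩ := exists_sub_mem_sub_mem_of_sub_eq_univ zero_one_three_sub_self_zmod6 j j'
    obtain ⟨i, rfl⟩ := Fin.exists_natCast_eq hn r
    exact ⟨i, hj, hj'⟩
  · exact fun i i' ↦ exists_sub_mem_sub_mem_of_sub_eq_univ' zero_one_three_sub_self_zmod6 _ _
  · simp only [Set.mem_insert_iff, Set.mem_singleton_iff]
    decide
end

section
/- For even r ≥ 4, the k-tuple graph of the 6-cycle C6 obtained by replacing each vertex of one part by k = r/2 copies is a bipartite biregular graph of degrees (2, r) and diameter 3 on 3(1 + r/2) vertices, attaining the Moore bound M(r,2;3) = 3(1 + r/2). -/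
open SimpleGraph

section bipTupleGraph

variable {A B : Type*} (R : A → B → Prop) (k : ℕ)

@[simp]
lemma bipTupleGraph_adj_inl_inr (a : A × Fin k) (b : B) :
    (bipTupleGraph R k).Adj (.inl a) (.inr b) ↔ R a.1 b := Iff.rfl

@[simp]
lemma bipTupleGraph_adj_inr_inl (a : A × Fin k) (b : B) :
    (bipTupleGraph R k).Adj (.inr b) (.inl a) ↔ R a.1 b := Iff.rfl

@[simp]
lemma bipTupleGraph_not_adj_inl_inl (a a' : A × Fin k) :
    ¬(bipTupleGraph R k).Adj (.inl a) (.inl a') := id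

@[simp]
lemma bipTupleGraph_not_adj_inr_inr (b b' : B) :
    ¬(bipTupleGraph R k).Adj (.inr b) (.inr b') := id

lemma bipTupleGraph_neighborSet_inl (a : A × Fin k) :
    (bipTupleGraph R k).neighborSet (.inl a) = .inr '' {b | R a.1 b} := by
  ext (_ | _) <;> simp

lemma bipTupleGraph_neighborSet_inr (b : B) :
    (bipTupleGraph R k).neighborSet (.inr b) = .inl '' ({a | R a b} ×ˢ Set.univ) := by
  ext (_ | _) <;> simp

lemma ncard_bipTupleGraph_neighborSet_inl (a : A × Fin k) :
    ((bipTupleGraph R k).neighborSet (.inl a)).ncard = {b | R a.1 b}.ncard := by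
  rw [bipTupleGraph_neighborSet_inl, Set.ncard_image_of_injective _ Sum.inr_injective]

lemma ncard_bipTupleGraph_neighborSet_inr (b : B) :
    ((bipTupleGraph R k).neighborSet (.inr b)).ncard = {a | R a b}.ncard * k := by
  rw [bipTupleGraph_neighborSet_inr, Set.ncard_image_of_injective _ Sum.inl_injective,
    Set.ncard_prod, Set.ncard_univ, Nat.card_fin]

lemma bipTupleGraph_commonNeighbors_inl_inr (a : A × Fin k) (b : B) :
    (bipTupleGraph R k).commonNeighbors (.inl a) (.inr b) = ∅ := by
  ext (_ | _) <;> simp [mem_commonNeighbors]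

lemma three_le_bipTupleGraph_edist {a : A × Fin k} {b : B} (h : ¬R a.1 b) :
    3 ≤ (bipTupleGraph R k).edist (.inl a) (.inr b) :=
  Order.add_one_le_of_lt <| two_lt_edist_iff.mpr
    ⟨Sum.inl_ne_inr, h, bipTupleGraph_commonNeighbors_inl_inr R k a b⟩

variable {R k}

lemma bipTupleGraph_edist_inl_inl_le_two {a a' : A × Fin k} {b : B} (h : R a.1 b)
    (h' : R a'.1 b) : (bipTupleGraph R k).edist (.inl a) (.inl a') ≤ 2 :=
  (Walk.cons (G := bipTupleGraph R k) (u := Sum.inl a) (v := Sum.inr b) h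
    (Walk.cons (v := Sum.inl a') h' .nil)).edist_le

lemma bipTupleGraph_edist_inr_inr_le_two {a : A × Fin k} {b b' : B} (h : R a.1 b)
    (h' : R a.1 b') : (bipTupleGraph R k).edist (.inr b) (.inr b') ≤ 2 :=
  (Walk.cons (G := bipTupleGraph R k) (u := Sum.inr b) (v := Sum.inl a) h
    (Walk.cons (v := Sum.inr b') h' .nil)).edist_le

lemma bipTupleGraph_edist_inl_inr_le_three {a a' : A × Fin k} {b b' : B} (h₁ : R a.1 b)
    (h₂ : R a'.1 b) (h₃ : R a'.1 b') : (bipTupleGraph R k).edist (.inl a) (.inr b') ≤ 3 :=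
  (Walk.cons (G := bipTupleGraph R k) (u := Sum.inl a) (v := Sum.inr b) h₁
    (Walk.cons (v := Sum.inl a') h₂ (Walk.cons (v := Sum.inr b') h₃ .nil))).edist_le

lemma bipTupleGraph_ediam_le_three [NeZero k] (hA : ∀ a a', ∃ b, R a b ∧ R a' b)
    (hB : ∀ b b', ∃ a, R a b ∧ R a b') : (bipTupleGraph R k).ediam ≤ 3 := by
  have inl_inr (a : A × Fin k) (b : B) : (bipTupleGraph R k).edist (.inl a) (.inr b) ≤ 3 := by
    obtain ⟨b', hab', -⟩ := hA a.1 a.1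
    obtain ⟨a', ha'b', ha'b⟩ := hB b' b
    exact bipTupleGraph_edist_inl_inr_le_three (a' := (a', 0)) hab' ha'b' ha'b
  refine ediam_le_of_edist_le ?_
  rintro (a | b) (a' | b')
  · obtain ⟨b, hb, hb'⟩ := hA a.1 a'.1
    exact (bipTupleGraph_edist_inl_inl_le_two hb hb').trans (by norm_num)
  · exact inl_inr a b'
  · exact edist_comm.trans_le (inl_inr a' b)
  · obtain ⟨a, ha, ha'⟩ := hB b b'
    exact (bipTupleGraph_edist_inr_inr_le_two (a := (a, 0)) ha ha').trans (by norm_num)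

lemma bipTupleGraph_diam_eq_three [NeZero k] (hA : ∀ a a', ∃ b, R a b ∧ R a' b)
    (hB : ∀ b b', ∃ a, R a b ∧ R a b') {a : A} {b : B} (hab : ¬R a b) :
    (bipTupleGraph R k).diam = 3 := by
  have hlow := (three_le_bipTupleGraph_edist R k (a := (a, 0)) hab).trans edist_le_ediam
  rw [diam, le_antisymm (bipTupleGraph_ediam_le_three hA hB) hlow]
  rfl

end bipTupleGraph

/-- For even `r ≥ 4` and `k = r/2`, the `k`-tuple graph of the 6-cycle
(viewed as the bipartite graph on parts `Z_3`, `Z_3` with `a ~ b` iff `b = a` or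
`b = a+1`), obtained by replacing each vertex of one part by `k` copies, is a bipartite
biregular graph of degrees `(2, r)` and diameter `3` on `3(1 + r/2)` vertices, attaining
the Moore bound `M(r,2;3) = 3(1 + r/2)`. -/
theorem stmt_18 (r : ℕ) (hr : 4 ≤ r) (heven : Even r) :
    (∀ b : ZMod 3,
      ((bipTupleGraph (fun (a b : ZMod 3) => b = a ∨ b = a + 1) (r / 2)).neighborSet
        (Sum.inr b)).ncard = r) ∧
    (∀ a : ZMod 3 × Fin (r / 2),
      ((bipTupleGraph (fun (a b : ZMod 3) => b = a ∨ b = a + 1) (r / 2)).neighborSet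
        (Sum.inl a)).ncard = 2) ∧
    (bipTupleGraph (fun (a b : ZMod 3) => b = a ∨ b = a + 1) (r / 2)).diam = 3 ∧
    Fintype.card ((ZMod 3 × Fin (r / 2)) ⊕ ZMod 3) = 3 * (1 + r / 2) := by
  have : NeZero (r / 2) := ⟨by omega⟩
  have degree_two_left : ∀ b : ZMod 3, {a : ZMod 3 | b = a ∨ b = a + 1}.ncard = 2 := by
    simp only [Set.ncard_eq_toFinset_card']; decide
  have degree_two_right : ∀ a : ZMod 3, {b : ZMod 3 | b = a ∨ b = a + 1}.ncard = 2 := by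
    simp only [Set.ncard_eq_toFinset_card']; decide
  refine ⟨fun b => ?_, fun a => ?_, ?_, ?_⟩
  · rw [ncard_bipTupleGraph_neighborSet_inr, degree_two_left]
    exact Nat.two_mul_div_two_of_even heven
  · rw [ncard_bipTupleGraph_neighborSet_inl, degree_two_right]
  · exact bipTupleGraph_diam_eq_three (by decide) (by decide) (a := 0) (b := 2) (by decide)
  · simp only [Fintype.card_sum, Fintype.card_prod, ZMod.card, Fintype.card_fin]
    ring
end
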